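/- arXiv:2603.16573 — 7 statements merged into one kernel-verified Lean document; each statement's English description precedes it below -/
import Mathlib

section
/- Let f : ℝ^n → ℝ be differentiable at x, let g : ℝ^m → ℝ ∪ {+∞} be proper and convex with g(Ax) finite, and let A ∈ ℝ^{m×n}. Let c₁ > 0 and let v, s̃ ∈ ℝ^n and q_v, q_s ∈ ℝ with q_v ≥ c₁ and q_s ≥ c₁. Suppose α₁ minimizes α ↦ ∇f(x)ᵀv·α + g(Ax + αAv) + (q_v/2)‖v‖²α² over ℝ, α₂ minimizes α ↦ ∇f(x)ᵀs̃·α + g(Ax + αAs̃) + (q_s/2)‖s̃‖²α² over ℝ, and, with d̃ = α₁v + α₂s̃ and q_d = q_v‖α₁v‖² + q_s‖α₂s̃‖², α₃ minimizes α ↦ ∇f(x)ᵀd̃·α + g(Ax + αAd̃) + (q_d/2)α² over ℝ. Then the direction d = α₃d̃ satisfies ∇f(x)ᵀd + g(Ax + Ad) − g(Ax) ≤ −(c₁/2)‖d‖². -/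
/-!
Minimality of `α₃` compared with the competitors `(1 - t) α₃`, combined with the convexity
of `g` on the segment between `Ax` and `Ax + α₃ A d̃`, gives after division by `t` and `t → 0⁺`
the decrease `⟪∇f x, d⟫ + g(Ax + Ad) - g(Ax) ≤ -q_d α₃²`. Since `q_v, q_s ≥ c₁`,
`q_d ≥ c₁ (‖α₁v‖² + ‖α₂s̃‖²) ≥ (c₁/2) ‖d̃‖²`, and `‖d‖² = α₃² ‖d̃‖²`.
-/

open Filter Topology Set
open scoped RealInnerProductSpace

lemma le_of_forall_mem_Ioc_le_add_mul {x y c : ℝ} (h : ∀ t ∈ Ioc (0 : ℝ) 1, x ≤ y + c * t) :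
    x ≤ y := by
  have hlim : Tendsto (fun t : ℝ => y + c * t) (𝓝[>] 0) (𝓝 y) := by
    have hcont : Continuous fun t : ℝ => y + c * t := by fun_prop
    simpa using (hcont.tendsto 0).mono_left nhdsWithin_le_nhds
  exact ge_of_tendsto hlim (Filter.mem_of_superset (Ioc_mem_nhdsGT zero_lt_one) h)

/-- `r₀` and `r` stand for the values of the convex part at `0` and at the minimizer `α₀`;
`h` is minimality against `(1 - t) α₀` with the convex part bounded by its chord. -/
lemma linear_add_sq_add_le_of_forall_le_chord {a q α₀ r₀ r : ℝ}
    (h : ∀ t ∈ Ioc (0 : ℝ) 1, a * α₀ + q / 2 * α₀ ^ 2 + r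
      ≤ a * ((1 - t) * α₀) + q / 2 * ((1 - t) * α₀) ^ 2 + (t * r₀ + (1 - t) * r)) :
    a * α₀ + q * α₀ ^ 2 + r ≤ r₀ := by
  refine le_of_forall_mem_Ioc_le_add_mul (c := q / 2 * α₀ ^ 2) fun t ht => ?_
  have hscaled : t * (a * α₀ + q * α₀ ^ 2 + r) ≤ t * (r₀ + q / 2 * α₀ ^ 2 * t) := by
    nlinarith [h t ht]
  exact le_of_mul_le_mul_left hscaled ht.1

section LineSearch

variable {E : Type*} [AddCommGroup E] [Module ℝ E] {g : E → EReal}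

theorem linear_add_sub_le_neg_mul_sq_of_minimizes
    (hg_ne_bot : ∀ z, g z ≠ ⊥)
    (hg_convex : ∀ u w : E, ∀ t : ℝ, 0 ≤ t → t ≤ 1 →
        g (t • u + (1 - t) • w) ≤ (t : EReal) * g u + ((1 - t : ℝ) : EReal) * g w)
    {u w : E} (hu : g u ≠ ⊤) {a q α₀ : ℝ}
    (hmin : ∀ α : ℝ, ((a * α₀ + q / 2 * α₀ ^ 2 : ℝ) : EReal) + g (u + α₀ • w)
      ≤ ((a * α + q / 2 * α ^ 2 : ℝ) : EReal) + g (u + α • w)) :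
    ((a * α₀ : ℝ) : EReal) + g (u + α₀ • w) - g u ≤ ((-(q * α₀ ^ 2) : ℝ) : EReal) := by
  have hu_eq : g u = ((g u).toReal : EReal) := (EReal.coe_toReal hu (hg_ne_bot u)).symm
  have hmin_ne_top : g (u + α₀ • w) ≠ ⊤ := by
    intro htop
    have h0 := hmin 0
    rw [zero_smul, add_zero, hu_eq, htop, EReal.add_top_of_ne_bot (EReal.coe_ne_bot _),
      ← EReal.coe_add] at h0
    exact EReal.coe_ne_top _ (top_le_iff.mp h0)
  have hmin_eq : g (u + α₀ • w) = ((g (u + α₀ • w)).toReal : EReal) :=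
    (EReal.coe_toReal hmin_ne_top (hg_ne_bot _)).symm
  have hreal : a * α₀ + q * α₀ ^ 2 + (g (u + α₀ • w)).toReal ≤ (g u).toReal := by
    refine linear_add_sq_add_le_of_forall_le_chord fun t ht => ?_
    have hchord := hg_convex u (u + α₀ • w) t ht.1.le ht.2
    have hseg : t • u + (1 - t) • (u + α₀ • w) = u + ((1 - t) * α₀) • w := by module
    rw [hseg, hu_eq, hmin_eq] at hchord
    have hcomp := hmin ((1 - t) * α₀)
    rw [hmin_eq] at hcomp
    exact_mod_cast hcomp.trans (add_le_add le_rfl hchord)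
  rw [hu_eq, hmin_eq, ← EReal.coe_add, ← EReal.coe_sub, EReal.coe_le_coe_iff]
  linarith

end LineSearch

lemma half_mul_norm_add_sq_le {F : Type*} [SeminormedAddCommGroup F] {c p q : ℝ} (hc : 0 ≤ c)
    (hp : c ≤ p) (hq : c ≤ q) (x y : F) :
    c / 2 * ‖x + y‖ ^ 2 ≤ p * ‖x‖ ^ 2 + q * ‖y‖ ^ 2 := by
  have hsq : ‖x + y‖ ^ 2 ≤ 2 * (‖x‖ ^ 2 + ‖y‖ ^ 2) :=
    (pow_le_pow_left₀ (norm_nonneg _) (norm_add_le x y) 2).trans add_sq_le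
  have hx : c * ‖x‖ ^ 2 ≤ p * ‖x‖ ^ 2 := mul_le_mul_of_nonneg_right hp (sq_nonneg _)
  have hy : c * ‖y‖ ^ 2 ≤ q * ‖y‖ ^ 2 := mul_le_mul_of_nonneg_right hq (sq_nonneg _)
  nlinarith [mul_le_mul_of_nonneg_left hsq hc]

theorem stmt1_general {n m : ℕ}
    (f : EuclideanSpace ℝ (Fin n) → ℝ) (x : EuclideanSpace ℝ (Fin n))
    (g : EuclideanSpace ℝ (Fin m) → EReal)
    (hg_ne_bot : ∀ z, g z ≠ ⊥)
    (hg_convex : ∀ u w : EuclideanSpace ℝ (Fin m), ∀ t : ℝ, 0 ≤ t → t ≤ 1 →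
        g (t • u + (1 - t) • w) ≤ (t : EReal) * g u + ((1 - t : ℝ) : EReal) * g w)
    (A : Matrix (Fin m) (Fin n) ℝ)
    (hgAx : g (Matrix.toEuclideanLin A x) ≠ ⊤)
    (c₁ : ℝ) (hc₁ : 0 < c₁)
    (v s : EuclideanSpace ℝ (Fin n))
    (qv qs : ℝ) (hqv : c₁ ≤ qv) (hqs : c₁ ≤ qs)
    (α₁ α₂ α₃ : ℝ)
    (dtilde : EuclideanSpace ℝ (Fin n)) (hdtilde : dtilde = α₁ • v + α₂ • s)
    (qd : ℝ) (hqd : qd = qv * ‖α₁ • v‖ ^ 2 + qs * ‖α₂ • s‖ ^ 2)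
    (hα₃ : ∀ α : ℝ,
        ((⟪gradient f x, dtilde⟫ * α₃ + qd / 2 * α₃ ^ 2 : ℝ) : EReal)
            + g (Matrix.toEuclideanLin A x + α₃ • Matrix.toEuclideanLin A dtilde)
          ≤ ((⟪gradient f x, dtilde⟫ * α + qd / 2 * α ^ 2 : ℝ) : EReal)
            + g (Matrix.toEuclideanLin A x + α • Matrix.toEuclideanLin A dtilde))
    (d : EuclideanSpace ℝ (Fin n)) (hd : d = α₃ • dtilde) :
    ((⟪gradient f x, d⟫ : ℝ) : EReal)
        + g (Matrix.toEuclideanLin A x + Matrix.toEuclideanLin A d)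
        - g (Matrix.toEuclideanLin A x)
      ≤ ((-(c₁ / 2) * ‖d‖ ^ 2 : ℝ) : EReal) := by
  have hdecrease := linear_add_sub_le_neg_mul_sq_of_minimizes hg_ne_bot hg_convex hgAx hα₃
  have hqd_ge : c₁ / 2 * ‖dtilde‖ ^ 2 ≤ qd :=
    hqd ▸ hdtilde ▸ half_mul_norm_add_sq_le hc₁.le hqv hqs _ _
  have hinner : ⟪gradient f x, d⟫ = ⟪gradient f x, dtilde⟫ * α₃ := by
    rw [hd, real_inner_smul_right, mul_comm]
  have hnorm : ‖d‖ ^ 2 = α₃ ^ 2 * ‖dtilde‖ ^ 2 := by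
    rw [hd, norm_smul, mul_pow, Real.norm_eq_abs, sq_abs]
  rw [hinner, hd, map_smul]
  refine hdecrease.trans (EReal.coe_le_coe_iff.mpr ?_)
  rw [← hd, hnorm]
  nlinarith [mul_le_mul_of_nonneg_left hqd_ge (sq_nonneg α₃)]

/-- If `α₁, α₂, α₃` are the minimizers of the three one-dimensional
subproblems along `v`, `s̃` and `d̃ = α₁v + α₂s̃` with curvature parameters `q_v, q_s ≥ c₁ > 0`,
then the direction `d = α₃d̃` satisfies the sufficient decrease condition
`∇f(x)ᵀd + g(Ax + Ad) − g(Ax) ≤ −(c₁/2)‖d‖²`. -/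
theorem stmt1 {n m : ℕ}
    (f : EuclideanSpace ℝ (Fin n) → ℝ) (x : EuclideanSpace ℝ (Fin n))
    (hf : DifferentiableAt ℝ f x)
    (g : EuclideanSpace ℝ (Fin m) → EReal)
    (hg_proper : ∃ z, g z ≠ ⊤)
    (hg_ne_bot : ∀ z, g z ≠ ⊥)
    (hg_convex : ∀ u w : EuclideanSpace ℝ (Fin m), ∀ t : ℝ, 0 ≤ t → t ≤ 1 →
        g (t • u + (1 - t) • w) ≤ (t : EReal) * g u + ((1 - t : ℝ) : EReal) * g w)
    (A : Matrix (Fin m) (Fin n) ℝ)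
    (hgAx : g (Matrix.toEuclideanLin A x) ≠ ⊤)
    (c₁ : ℝ) (hc₁ : 0 < c₁)
    (v s : EuclideanSpace ℝ (Fin n))
    (qv qs : ℝ) (hqv : c₁ ≤ qv) (hqs : c₁ ≤ qs)
    (α₁ α₂ α₃ : ℝ)
    (hα₁ : ∀ α : ℝ,
        ((⟪gradient f x, v⟫ * α₁ + qv / 2 * ‖v‖ ^ 2 * α₁ ^ 2 : ℝ) : EReal)
            + g (Matrix.toEuclideanLin A x + α₁ • Matrix.toEuclideanLin A v)
          ≤ ((⟪gradient f x, v⟫ * α + qv / 2 * ‖v‖ ^ 2 * α ^ 2 : ℝ) : EReal)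
            + g (Matrix.toEuclideanLin A x + α • Matrix.toEuclideanLin A v))
    (hα₂ : ∀ α : ℝ,
        ((⟪gradient f x, s⟫ * α₂ + qs / 2 * ‖s‖ ^ 2 * α₂ ^ 2 : ℝ) : EReal)
            + g (Matrix.toEuclideanLin A x + α₂ • Matrix.toEuclideanLin A s)
          ≤ ((⟪gradient f x, s⟫ * α + qs / 2 * ‖s‖ ^ 2 * α ^ 2 : ℝ) : EReal)
            + g (Matrix.toEuclideanLin A x + α • Matrix.toEuclideanLin A s))
    (dtilde : EuclideanSpace ℝ (Fin n)) (hdtilde : dtilde = α₁ • v + α₂ • s)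
    (qd : ℝ) (hqd : qd = qv * ‖α₁ • v‖ ^ 2 + qs * ‖α₂ • s‖ ^ 2)
    (hα₃ : ∀ α : ℝ,
        ((⟪gradient f x, dtilde⟫ * α₃ + qd / 2 * α₃ ^ 2 : ℝ) : EReal)
            + g (Matrix.toEuclideanLin A x + α₃ • Matrix.toEuclideanLin A dtilde)
          ≤ ((⟪gradient f x, dtilde⟫ * α + qd / 2 * α ^ 2 : ℝ) : EReal)
            + g (Matrix.toEuclideanLin A x + α • Matrix.toEuclideanLin A dtilde))
    (d : EuclideanSpace ℝ (Fin n)) (hd : d = α₃ • dtilde) :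
    ((⟪gradient f x, d⟫ : ℝ) : EReal)
        + g (Matrix.toEuclideanLin A x + Matrix.toEuclideanLin A d)
        - g (Matrix.toEuclideanLin A x)
      ≤ ((-(c₁ / 2) * ‖d‖ ^ 2 : ℝ) : EReal) :=
  stmt1_general f x g hg_ne_bot hg_convex A hgAx c₁ hc₁ v s qv qs hqv hqs α₁ α₂ α₃ dtilde hdtilde qd
    hqd hα₃ d hd
end

section
/- Let f : ℝ^n → ℝ be differentiable at x, let g : ℝ^m → ℝ ∪ {+∞} be proper and convex with g(Ax) finite, let A ∈ ℝ^{m×n}, and let constants 0 < c₁ ≤ c₂ and c₃ > 0 be given. Let P ∈ ℝ^{n×n} be symmetric with P ⪰ c₃I_n, and let v be a minimizer of v ↦ ∇f(x)ᵀv + g(Ax + Av) + (1/2)‖v‖²_P over ℝ^n. Let s̃ ∈ ℝ^n and q_v, q_s ∈ ℝ with c₁ ≤ q_v ≤ c₂ and q_s ≥ c₁. Suppose α₁ minimizes α ↦ ∇f(x)ᵀv·α + g(Ax + αAv) + (q_v/2)‖v‖²α² over ℝ, α₂ minimizes α ↦ ∇f(x)ᵀs̃·α + g(Ax + αAs̃)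 + (q_s/2)‖s̃‖²α² over ℝ, and, with d̃ = α₁v + α₂s̃ and q_d = q_v‖α₁v‖² + q_s‖α₂s̃‖², α₃ minimizes α ↦ ∇f(x)ᵀd̃·α + g(Ax + αAd̃) + (q_d/2)α² over ℝ. Then the direction d = α₃d̃ satisfies ∇f(x)ᵀd + g(Ax + Ad) − g(Ax) ≤ −(c₃·min{1, c₃/c₂}/4)·‖v‖². -/
/-! The prox step `v` gives, after comparing `v` with `t • v` and letting `t → 1`, the decrease
`⟪∇f(x), v⟫ + g(Ax + Av) - g(Ax) ≤ -⟪v, Pv⟫ ≤ -c₃‖v‖²`. By convexity of `g`, the first line search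
does at least as well as the step `β = min 1 (c₃ / q_v)` along `v`, which gives
`-(c₃ / 2) min 1 (c₃ / c₂) ‖v‖²`, and the second does at least as well as the step `0`. The third
does at least as well as the step `1 / 2` along `d̃ = α₁ v + α₂ s̃`, whose value is by convexity at
most the average of the first two; the term `q_d α₃² / 2 ≥ 0` can only help. -/

open Filter Topology Set
open scoped RealInnerProductSpace

theorem EReal.ne_top_of_coe_add_le {a b : ℝ} {y z : EReal} (hz : z ≠ ⊤)
    (h : (a : EReal) + y ≤ b + z) : y ≠ ⊤ := by
  rintro rfl
  rw [EReal.coe_add_top, top_le_iff] at h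
  exact EReal.add_ne_top (EReal.coe_ne_top b) hz h

theorem EReal.add_toReal_le_of_coe_add_le {a b : ℝ} {y z : EReal} (hy : y ≠ ⊥) (hz : z ≠ ⊥)
    (hz' : z ≠ ⊤) (h : (a : EReal) + y ≤ b + z) : a + y.toReal ≤ b + z.toReal := by
  rw [← EReal.coe_toReal (EReal.ne_top_of_coe_add_le hz' h) hy, ← EReal.coe_toReal hz' hz] at h
  exact_mod_cast h

theorem EReal.coe_add_sub_le_coe_of_toReal_le {a b : ℝ} {y z : EReal} (hy : y ≠ ⊤) (hy' : y ≠ ⊥)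
    (hz : z ≠ ⊤) (hz' : z ≠ ⊥) (h : a + y.toReal - z.toReal ≤ b) : (a : EReal) + y - z ≤ b := by
  rw [← EReal.coe_toReal hy hy', ← EReal.coe_toReal hz hz']
  exact_mod_cast h

theorem convexOn_toReal_of_ereal {F : Type*} [AddCommGroup F] [Module ℝ F] {g : F → EReal}
    (hbot : ∀ z, g z ≠ ⊥)
    (hconv : ∀ u w : F, ∀ t : ℝ, 0 ≤ t → t ≤ 1 →
        g (t • u + (1 - t) • w) ≤ (t : EReal) * g u + ((1 - t : ℝ) : EReal) * g w) :
    ConvexOn ℝ {z | g z ≠ ⊤} (fun z => (g z).toReal) := by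
  have hle : ∀ u ∈ {z | g z ≠ ⊤}, ∀ w ∈ {z | g z ≠ ⊤}, ∀ a b : ℝ, 0 ≤ a → 0 ≤ b → a + b = 1 →
      g (a • u + b • w) ≤ ((a * (g u).toReal + b * (g w).toReal : ℝ) : EReal) := by
    intro u hu w hw a b ha hb hab
    obtain rfl : b = 1 - a := by linarith
    have := hconv u w a ha (by linarith)
    rwa [← EReal.coe_toReal hu (hbot u), ← EReal.coe_toReal hw (hbot w)] at this
  refine ⟨fun u hu w hw a b ha hb hab => ?_, fun u hu w hw a b ha hb hab => ?_⟩
  · exact ne_top_of_le_ne_top (EReal.coe_ne_top _) (hle u hu w hw a b ha hb hab)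
  · have h := hle u hu w hw a b ha hb hab
    have := EReal.toReal_le_toReal h (hbot _) (EReal.coe_ne_top _)
    simpa only [smul_eq_mul, EReal.toReal_coe] using this

theorem mul_norm_sq_le_inner_toEuclideanLin_of_posSemidef_sub {ι : Type*} [Fintype ι]
    [DecidableEq ι] {c : ℝ} {P : Matrix ι ι ℝ} (hP : (P - c • (1 : Matrix ι ι ℝ)).PosSemidef)
    (v : EuclideanSpace ℝ ι) : c * ‖v‖ ^ 2 ≤ ⟪v, Matrix.toEuclideanLin P v⟫ := by
  simpa [inner_sub_right, real_inner_smul_right] using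
    (Matrix.isPositive_toEuclideanLin_iff.2 hP).inner_nonneg_right v

theorem le_neg_of_forall_mem_Ico {Δ σ : ℝ} (h : ∀ t ∈ Ico (0 : ℝ) 1, Δ ≤ -((1 + t) / 2 * σ)) :
    Δ ≤ -σ := by
  have hlim : Tendsto (fun t : ℝ => -((1 + t) / 2 * σ)) (𝓝[<] 1) (𝓝 (-σ)) := by
    have hcont : Continuous (fun t : ℝ => -((1 + t) / 2 * σ)) := by fun_prop
    convert (hcont.tendsto 1).mono_left nhdsWithin_le_nhds using 2
    ring
  refine ge_of_tendsto hlim ?_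
  filter_upwards [Ico_mem_nhdsLT one_pos] with t ht using h t ht

theorem min_one_div_mul_add_sq_le {D N q Q c : ℝ} (hq : 0 < q) (hqQ : q ≤ Q) (hc : 0 < c)
    (hN : 0 ≤ N) (hD : D ≤ -(c * N)) :
    min 1 (c / q) * D + q * N / 2 * min 1 (c / q) ^ 2 ≤ -(c * min 1 (c / Q) / 2) * N := by
  set β := min 1 (c / q)
  have hβ : 0 ≤ β := le_min zero_le_one (div_nonneg hc.le hq.le)
  have hqβ : q * β ≤ c := (le_div_iff₀' hq).1 (min_le_right _ _)
  have hβQ : min 1 (c / Q) ≤ β := min_le_min le_rfl (div_le_div_of_nonneg_left hc.le hq hqQ)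
  nlinarith [mul_le_mul_of_nonneg_left hD hβ, mul_le_mul_of_nonneg_right hqβ (mul_nonneg hβ hN),
    mul_le_mul_of_nonneg_left hβQ (mul_nonneg hc.le hN)]

section
variable {E F : Type*} [NormedAddCommGroup E] [InnerProductSpace ℝ E] [AddCommGroup F]
  [Module ℝ F] {g : F → EReal}

theorem prox_descent (hbot : ∀ z, g z ≠ ⊥)
    (hφ : ConvexOn ℝ {z | g z ≠ ⊤} (fun z => (g z).toReal)) {G v : E} {P : E →ₗ[ℝ] E}
    {T : E →ₗ[ℝ] F} {y : F} (hy : g y ≠ ⊤)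
    (hv : ∀ w, ((⟪G, v⟫ + 1 / 2 * ⟪v, P v⟫ : ℝ) : EReal) + g (y + T v)
      ≤ ((⟪G, w⟫ + 1 / 2 * ⟪w, P w⟫ : ℝ) : EReal) + g (y + T w)) :
    g (y + T v) ≠ ⊤ ∧ ⟪G, v⟫ + (g (y + T v)).toReal - (g y).toReal ≤ -⟪v, P v⟫ := by
  have hv_fin : g (y + T v) ≠ ⊤ := EReal.ne_top_of_coe_add_le hy (by
    simpa only [map_zero, add_zero, inner_zero_right, inner_zero_left, mul_zero] using hv 0)
  refine ⟨hv_fin, le_neg_of_forall_mem_Ico fun t ⟨ht0, ht1⟩ => ?_⟩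
  -- comparing `v` with `t • v` and using convexity on `[y, y + T v]`:
  -- `(1 - t) (⟪G, v⟫ + g (y + T v) - g y) ≤ -(1 - t²) ⟪v, P v⟫ / 2`
  have hseg : y + T (t • v) = t • (y + T v) + (1 - t) • y := by rw [map_smul]; module
  have hmem : g (y + T (t • v)) ≠ ⊤ :=
    hseg ▸ hφ.1 hv_fin hy ht0 (sub_nonneg.2 ht1.le) (add_sub_cancel t 1)
  have hconv := hφ.2 hv_fin hy ht0 (sub_nonneg.2 ht1.le) (add_sub_cancel t 1)
  have hmin := EReal.add_toReal_le_of_coe_add_le (hbot _) (hbot _) hmem (hv (t • v))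
  rw [hseg] at hmin
  simp only [smul_eq_mul, real_inner_smul_left, real_inner_smul_right, map_smul] at hmin hconv
  refine le_of_mul_le_mul_left ?_ (sub_pos.2 ht1)
  nlinarith

theorem lineSearch_toReal_le (hbot : ∀ z, g z ≠ ⊥) {y w : F} {ℓ κ α₀ : ℝ}
    (hmin : ∀ α : ℝ, ((ℓ * α₀ + κ / 2 * α₀ ^ 2 : ℝ) : EReal) + g (y + α₀ • w)
      ≤ ((ℓ * α + κ / 2 * α ^ 2 : ℝ) : EReal) + g (y + α • w))
    {α : ℝ} (hα : g (y + α • w) ≠ ⊤) :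
    g (y + α₀ • w) ≠ ⊤ ∧ ℓ * α₀ + κ / 2 * α₀ ^ 2 + (g (y + α₀ • w)).toReal
      ≤ ℓ * α + κ / 2 * α ^ 2 + (g (y + α • w)).toReal :=
  ⟨EReal.ne_top_of_coe_add_le hα (hmin α),
    EReal.add_toReal_le_of_coe_add_le (hbot _) (hbot _) hα (hmin α)⟩

theorem lineSearch_sub_le_zero (hbot : ∀ z, g z ≠ ⊥) {y w : F} {ℓ κ α₀ : ℝ} (hy : g y ≠ ⊤)
    (hmin : ∀ α : ℝ, ((ℓ * α₀ + κ / 2 * α₀ ^ 2 : ℝ) : EReal) + g (y + α₀ • w)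
      ≤ ((ℓ * α + κ / 2 * α ^ 2 : ℝ) : EReal) + g (y + α • w)) :
    g (y + α₀ • w) ≠ ⊤ ∧ ℓ * α₀ + κ / 2 * α₀ ^ 2 + (g (y + α₀ • w)).toReal - (g y).toReal ≤ 0 := by
  obtain ⟨h₀, hle⟩ := lineSearch_toReal_le hbot hmin (α := 0) (by rwa [zero_smul, add_zero])
  rw [zero_smul, add_zero] at hle
  exact ⟨h₀, by linarith⟩

theorem lineSearch_sub_le_of_mem_Icc (hbot : ∀ z, g z ≠ ⊥)
    (hφ : ConvexOn ℝ {z | g z ≠ ⊤} (fun z => (g z).toReal)) {y w : F} {ℓ κ α₀ : ℝ}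
    (hy : g y ≠ ⊤) (hw : g (y + w) ≠ ⊤)
    (hmin : ∀ α : ℝ, ((ℓ * α₀ + κ / 2 * α₀ ^ 2 : ℝ) : EReal) + g (y + α₀ • w)
      ≤ ((ℓ * α + κ / 2 * α ^ 2 : ℝ) : EReal) + g (y + α • w))
    {β : ℝ} (hβ : β ∈ Icc (0 : ℝ) 1) :
    g (y + α₀ • w) ≠ ⊤ ∧ ℓ * α₀ + κ / 2 * α₀ ^ 2 + (g (y + α₀ • w)).toReal - (g y).toReal
      ≤ β * (ℓ + (g (y + w)).toReal - (g y).toReal) + κ / 2 * β ^ 2 := by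
  have hseg : y + β • w = β • (y + w) + (1 - β) • y := by module
  have hconv := hφ.2 hw hy hβ.1 (sub_nonneg.2 hβ.2) (add_sub_cancel β 1)
  obtain ⟨h₀, hle⟩ := lineSearch_toReal_le hbot hmin (α := β)
    (hseg ▸ hφ.1 hw hy hβ.1 (sub_nonneg.2 hβ.2) (add_sub_cancel β 1))
  rw [← hseg] at hconv
  simp only [smul_eq_mul] at hconv
  exact ⟨h₀, by linarith⟩

theorem lineSearch_le_midpoint (hbot : ∀ z, g z ≠ ⊥)
    (hφ : ConvexOn ℝ {z | g z ≠ ⊤} (fun z => (g z).toReal)) {y w₁ w₂ : F} {ℓ κ α₀ : ℝ}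
    (h₁ : g (y + w₁) ≠ ⊤) (h₂ : g (y + w₂) ≠ ⊤)
    (hmin : ∀ α : ℝ, ((ℓ * α₀ + κ / 2 * α₀ ^ 2 : ℝ) : EReal) + g (y + α₀ • (w₁ + w₂))
      ≤ ((ℓ * α + κ / 2 * α ^ 2 : ℝ) : EReal) + g (y + α • (w₁ + w₂))) :
    g (y + α₀ • (w₁ + w₂)) ≠ ⊤ ∧ ℓ * α₀ + κ / 2 * α₀ ^ 2 + (g (y + α₀ • (w₁ + w₂))).toReal
      ≤ ℓ / 2 + κ / 8 + ((g (y + w₁)).toReal + (g (y + w₂)).toReal) / 2 := by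
  have hmid : y + (1 / 2 : ℝ) • (w₁ + w₂) = (1 / 2 : ℝ) • (y + w₁) + (1 / 2 : ℝ) • (y + w₂) := by
    module
  have hconv := hφ.2 h₁ h₂ one_half_pos.le one_half_pos.le (add_halves 1)
  obtain ⟨h₀, hle⟩ := lineSearch_toReal_le hbot hmin (α := 1 / 2)
    (hmid ▸ hφ.1 h₁ h₂ one_half_pos.le one_half_pos.le (add_halves 1))
  rw [← hmid] at hconv
  simp only [smul_eq_mul] at hconv
  exact ⟨h₀, by linarith⟩

end

theorem stmt2_general {n m : ℕ}
    (f : EuclideanSpace ℝ (Fin n) → ℝ) (x : EuclideanSpace ℝ (Fin n))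
    (g : EuclideanSpace ℝ (Fin m) → EReal)
    (hg_ne_bot : ∀ z, g z ≠ ⊥)
    (hg_convex : ∀ u w : EuclideanSpace ℝ (Fin m), ∀ t : ℝ, 0 ≤ t → t ≤ 1 →
        g (t • u + (1 - t) • w) ≤ (t : EReal) * g u + ((1 - t : ℝ) : EReal) * g w)
    (A : Matrix (Fin m) (Fin n) ℝ)
    (hgAx : g (Matrix.toEuclideanLin A x) ≠ ⊤)
    (c₁ c₂ c₃ : ℝ) (hc₁ : 0 < c₁) (hc₃ : 0 < c₃)
    (P : Matrix (Fin n) (Fin n) ℝ)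
    (hP : (P - c₃ • (1 : Matrix (Fin n) (Fin n) ℝ)).PosSemidef)
    (v : EuclideanSpace ℝ (Fin n))
    (hv : ∀ w : EuclideanSpace ℝ (Fin n),
        ((⟪gradient f x, v⟫ + (1 / 2) * ⟪v, Matrix.toEuclideanLin P v⟫ : ℝ) : EReal)
            + g (Matrix.toEuclideanLin A x + Matrix.toEuclideanLin A v)
          ≤ ((⟪gradient f x, w⟫ + (1 / 2) * ⟪w, Matrix.toEuclideanLin P w⟫ : ℝ) : EReal)
            + g (Matrix.toEuclideanLin A x + Matrix.toEuclideanLin A w))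
    (s : EuclideanSpace ℝ (Fin n))
    (qv qs : ℝ) (hqv₁ : c₁ ≤ qv) (hqv₂ : qv ≤ c₂) (hqs : c₁ ≤ qs)
    (α₁ α₂ α₃ : ℝ)
    (hα₁ : ∀ α : ℝ,
        ((⟪gradient f x, v⟫ * α₁ + qv / 2 * ‖v‖ ^ 2 * α₁ ^ 2 : ℝ) : EReal)
            + g (Matrix.toEuclideanLin A x + α₁ • Matrix.toEuclideanLin A v)
          ≤ ((⟪gradient f x, v⟫ * α + qv / 2 * ‖v‖ ^ 2 * α ^ 2 : ℝ) : EReal)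
            + g (Matrix.toEuclideanLin A x + α • Matrix.toEuclideanLin A v))
    (hα₂ : ∀ α : ℝ,
        ((⟪gradient f x, s⟫ * α₂ + qs / 2 * ‖s‖ ^ 2 * α₂ ^ 2 : ℝ) : EReal)
            + g (Matrix.toEuclideanLin A x + α₂ • Matrix.toEuclideanLin A s)
          ≤ ((⟪gradient f x, s⟫ * α + qs / 2 * ‖s‖ ^ 2 * α ^ 2 : ℝ) : EReal)
            + g (Matrix.toEuclideanLin A x + α • Matrix.toEuclideanLin A s))
    (dtilde : EuclideanSpace ℝ (Fin n)) (hdtilde : dtilde = α₁ • v + α₂ • s)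
    (qd : ℝ) (hqd : qd = qv * ‖α₁ • v‖ ^ 2 + qs * ‖α₂ • s‖ ^ 2)
    (hα₃ : ∀ α : ℝ,
        ((⟪gradient f x, dtilde⟫ * α₃ + qd / 2 * α₃ ^ 2 : ℝ) : EReal)
            + g (Matrix.toEuclideanLin A x + α₃ • Matrix.toEuclideanLin A dtilde)
          ≤ ((⟪gradient f x, dtilde⟫ * α + qd / 2 * α ^ 2 : ℝ) : EReal)
            + g (Matrix.toEuclideanLin A x + α • Matrix.toEuclideanLin A dtilde))
    (d : EuclideanSpace ℝ (Fin n)) (hd : d = α₃ • dtilde) :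
    ((⟪gradient f x, d⟫ : ℝ) : EReal)
        + g (Matrix.toEuclideanLin A x + Matrix.toEuclideanLin A d)
        - g (Matrix.toEuclideanLin A x)
      ≤ ((-(c₃ * min 1 (c₃ / c₂) / 4) * ‖v‖ ^ 2 : ℝ) : EReal) := by
  have hφ := convexOn_toReal_of_ereal hg_ne_bot hg_convex
  have hqv : 0 < qv := hc₁.trans_le hqv₁
  obtain ⟨hv_fin, hΔ⟩ := prox_descent hg_ne_bot hφ hgAx hv
  have hσ := mul_norm_sq_le_inner_toEuclideanLin_of_posSemidef_sub hP v
  simp_rw [div_mul_eq_mul_div qv, div_mul_eq_mul_div qs] at hα₁ hα₂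
  obtain ⟨h₁_fin, h₁⟩ := lineSearch_sub_le_of_mem_Icc hg_ne_bot hφ hgAx hv_fin hα₁
    (β := min 1 (c₃ / qv)) ⟨by positivity, min_le_left _ _⟩
  have hstep := min_one_div_mul_add_sq_le hqv hqv₂ hc₃ (sq_nonneg ‖v‖) (hΔ.trans (neg_le_neg hσ))
  obtain ⟨h₂_fin, h₂⟩ := lineSearch_sub_le_zero hg_ne_bot hgAx hα₂
  subst hdtilde hd
  rw [map_add, map_smul, map_smul] at hα₃
  obtain ⟨h₃_fin, h₃⟩ := lineSearch_le_midpoint hg_ne_bot hφ h₁_fin h₂_fin hα₃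
  have hqd' : qd = qv * ‖v‖ ^ 2 * α₁ ^ 2 + qs * ‖s‖ ^ 2 * α₂ ^ 2 := by
    simp only [hqd, norm_smul, mul_pow, Real.norm_eq_abs, sq_abs]
    ring
  have hqd_nonneg : 0 ≤ qd := by rw [hqd]; have hqs_pos := hc₁.trans_le hqs; positivity
  rw [map_smul, map_add, map_smul, map_smul]
  refine EReal.coe_add_sub_le_coe_of_toReal_le h₃_fin (hg_ne_bot _) hgAx (hg_ne_bot _) ?_
  have hℓ := inner_add_right (𝕜 := ℝ) (gradient f x) (α₁ • v) (α₂ • s)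
  rw [real_inner_smul_right, real_inner_smul_right] at hℓ
  rw [real_inner_smul_right]
  linarith [mul_nonneg hqd_nonneg (sq_nonneg α₃)]

/-- With `v` the preconditioned proximal gradient direction (`P ⪰ c₃Iₙ`),
`c₁ ≤ q_v ≤ c₂`, `q_s ≥ c₁`, and `α₁, α₂, α₃` the minimizers of the three one-dimensional
subproblems, the direction `d = α₃d̃` satisfies
`∇f(x)ᵀd + g(Ax + Ad) − g(Ax) ≤ −(c₃·min{1, c₃/c₂}/4)·‖v‖²`. -/
theorem stmt2 {n m : ℕ}
    (f : EuclideanSpace ℝ (Fin n) → ℝ) (x : EuclideanSpace ℝ (Fin n))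
    (hf : DifferentiableAt ℝ f x)
    (g : EuclideanSpace ℝ (Fin m) → EReal)
    (hg_proper : ∃ z, g z ≠ ⊤)
    (hg_ne_bot : ∀ z, g z ≠ ⊥)
    (hg_convex : ∀ u w : EuclideanSpace ℝ (Fin m), ∀ t : ℝ, 0 ≤ t → t ≤ 1 →
        g (t • u + (1 - t) • w) ≤ (t : EReal) * g u + ((1 - t : ℝ) : EReal) * g w)
    (A : Matrix (Fin m) (Fin n) ℝ)
    (hgAx : g (Matrix.toEuclideanLin A x) ≠ ⊤)
    (c₁ c₂ c₃ : ℝ) (hc₁ : 0 < c₁) (hc₁₂ : c₁ ≤ c₂) (hc₃ : 0 < c₃)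
    (P : Matrix (Fin n) (Fin n) ℝ) (hPsymm : P.IsSymm)
    (hP : (P - c₃ • (1 : Matrix (Fin n) (Fin n) ℝ)).PosSemidef)
    (v : EuclideanSpace ℝ (Fin n))
    (hv : ∀ w : EuclideanSpace ℝ (Fin n),
        ((⟪gradient f x, v⟫ + (1 / 2) * ⟪v, Matrix.toEuclideanLin P v⟫ : ℝ) : EReal)
            + g (Matrix.toEuclideanLin A x + Matrix.toEuclideanLin A v)
          ≤ ((⟪gradient f x, w⟫ + (1 / 2) * ⟪w, Matrix.toEuclideanLin P w⟫ : ℝ) : EReal)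
            + g (Matrix.toEuclideanLin A x + Matrix.toEuclideanLin A w))
    (s : EuclideanSpace ℝ (Fin n))
    (qv qs : ℝ) (hqv₁ : c₁ ≤ qv) (hqv₂ : qv ≤ c₂) (hqs : c₁ ≤ qs)
    (α₁ α₂ α₃ : ℝ)
    (hα₁ : ∀ α : ℝ,
        ((⟪gradient f x, v⟫ * α₁ + qv / 2 * ‖v‖ ^ 2 * α₁ ^ 2 : ℝ) : EReal)
            + g (Matrix.toEuclideanLin A x + α₁ • Matrix.toEuclideanLin A v)
          ≤ ((⟪gradient f x, v⟫ * α + qv / 2 * ‖v‖ ^ 2 * α ^ 2 : ℝ) : EReal)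
            + g (Matrix.toEuclideanLin A x + α • Matrix.toEuclideanLin A v))
    (hα₂ : ∀ α : ℝ,
        ((⟪gradient f x, s⟫ * α₂ + qs / 2 * ‖s‖ ^ 2 * α₂ ^ 2 : ℝ) : EReal)
            + g (Matrix.toEuclideanLin A x + α₂ • Matrix.toEuclideanLin A s)
          ≤ ((⟪gradient f x, s⟫ * α + qs / 2 * ‖s‖ ^ 2 * α ^ 2 : ℝ) : EReal)
            + g (Matrix.toEuclideanLin A x + α • Matrix.toEuclideanLin A s))
    (dtilde : EuclideanSpace ℝ (Fin n)) (hdtilde : dtilde = α₁ • v + α₂ • s)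
    (qd : ℝ) (hqd : qd = qv * ‖α₁ • v‖ ^ 2 + qs * ‖α₂ • s‖ ^ 2)
    (hα₃ : ∀ α : ℝ,
        ((⟪gradient f x, dtilde⟫ * α₃ + qd / 2 * α₃ ^ 2 : ℝ) : EReal)
            + g (Matrix.toEuclideanLin A x + α₃ • Matrix.toEuclideanLin A dtilde)
          ≤ ((⟪gradient f x, dtilde⟫ * α + qd / 2 * α ^ 2 : ℝ) : EReal)
            + g (Matrix.toEuclideanLin A x + α • Matrix.toEuclideanLin A dtilde))
    (d : EuclideanSpace ℝ (Fin n)) (hd : d = α₃ • dtilde) :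
    ((⟪gradient f x, d⟫ : ℝ) : EReal)
        + g (Matrix.toEuclideanLin A x + Matrix.toEuclideanLin A d)
        - g (Matrix.toEuclideanLin A x)
      ≤ ((-(c₃ * min 1 (c₃ / c₂) / 4) * ‖v‖ ^ 2 : ℝ) : EReal) :=
  stmt2_general f x g hg_ne_bot hg_convex A hgAx c₁ c₂ c₃ hc₁ hc₃ P hP v hv s qv qs hqv₁ hqv₂ hqs α₁
    α₂ α₃ hα₁ hα₂ dtilde hdtilde qd hqd hα₃ d hd
end

section
/- Let f : ℝ^n → ℝ be L-smooth (L > 0), let g : ℝ^m → ℝ ∪ {+∞} be proper and convex, let A ∈ ℝ^{m×n}, and set F(x) = f(x) + g(Ax). Let σ ∈ (0,1) and c₁ > 0. Suppose x, d ∈ ℝ^n with d ≠ 0, g(Ax) and g(Ax+Ad) finite, the sufficient decrease condition Δ := ∇f(x)ᵀd + g(Ax + Ad) − g(Ax) ≤ −(c₁/2)‖d‖² holds, and for some t ∈ (0, 1/2] the Armijo condition fails at stepsize 2t, i.e., F(x + 2t·d) − F(x) > 2σt·Δ. Then t > (1 − σ)c₁/(2L). -/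
/-!
The descent lemma for `f` and convexity of `g` on the segment from `Ax` to `Ax + Ad` give the
upper model `F(x + τd) - F(x) ≤ τΔ + (L/2)τ²‖d‖²` for `τ ∈ [0, 1]`. At `τ = 2t ≤ 1` the failed
Armijo test then forces `(1 - σ)(-Δ) < Lt‖d‖²`, and sufficient decrease `-Δ ≥ (c₁/2)‖d‖²` turns
this into the lower bound on `t`.
-/

open scoped RealInnerProductSpace

open Set

theorem le_add_deriv_add_of_deriv_sub_le {φ φ' : ℝ → ℝ} {K : ℝ}
    (hφ : ∀ s, HasDerivAt φ (φ' s) s) (hφ' : ∀ s ∈ Ioo (0 : ℝ) 1, φ' s - φ' 0 ≤ K * s) :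
    φ 1 ≤ φ 0 + φ' 0 + K / 2 := by
  set ψ : ℝ → ℝ := fun s => φ s - s * φ' 0 - K / 2 * s ^ 2
  have hψ : ∀ s, HasDerivAt ψ (φ' s - φ' 0 - K * s) s := fun s =>
    (((hφ s).sub ((hasDerivAt_id s).mul_const (φ' 0))).sub
      ((hasDerivAt_pow 2 s).const_mul (K / 2))).congr_deriv (by
        simp only [one_mul, Nat.cast_ofNat, Nat.add_one_sub_one, pow_one]; ring)
  have hanti : AntitoneOn ψ (Icc 0 1) := by
    refine antitoneOn_of_hasDerivWithinAt_nonpos (convex_Icc 0 1)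
      (fun s _ => (hψ s).continuousAt.continuousWithinAt)
      (fun s _ => (hψ s).hasDerivWithinAt) fun s hs => ?_
    rw [interior_Icc] at hs
    linarith [hφ' s hs]
  have := hanti (left_mem_Icc.2 zero_le_one) (right_mem_Icc.2 zero_le_one) zero_le_one
  simp only [ψ] at this
  linarith

/-- The descent lemma. -/
theorem le_add_inner_gradient_add_of_lipschitz_gradient
    {E : Type*} [NormedAddCommGroup E] [InnerProductSpace ℝ E] [CompleteSpace E]
    {f : E → ℝ} {L : ℝ} (hf : Differentiable ℝ f)
    (hlip : ∀ x y, ‖gradient f x - gradient f y‖ ≤ L * ‖x - y‖) (x y : E) :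
    f y ≤ f x + ⟪gradient f x, y - x⟫ + L / 2 * ‖y - x‖ ^ 2 := by
  set v := y - x
  have hφ : ∀ s : ℝ, HasDerivAt (fun s : ℝ => f (x + s • v)) ⟪gradient f (x + s • v), v⟫ s :=
    fun s => by
      have hline : HasDerivAt (fun s : ℝ => x + s • v) v s := by
        simpa using ((hasDerivAt_id s).smul_const v).const_add x
      simpa [Function.comp_def] using
        (hf (x + s • v)).hasGradientAt.hasFDerivAt.comp_hasDerivAt s hline
  have hgrowth : ∀ s ∈ Ioo (0 : ℝ) 1,
      ⟪gradient f (x + s • v), v⟫ - ⟪gradient f (x + (0 : ℝ) • v), v⟫ ≤ L * ‖v‖ ^ 2 * s := by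
    intro s hs
    calc ⟪gradient f (x + s • v), v⟫ - ⟪gradient f (x + (0 : ℝ) • v), v⟫
        = ⟪gradient f (x + s • v) - gradient f x, v⟫ := by simp [inner_sub_left]
      _ ≤ ‖gradient f (x + s • v) - gradient f x‖ * ‖v‖ := real_inner_le_norm _ _
      _ ≤ L * ‖x + s • v - x‖ * ‖v‖ := by gcongr; exact hlip _ _
      _ = L * ‖v‖ ^ 2 * s := by
        rw [add_sub_cancel_left, norm_smul, Real.norm_of_nonneg hs.1.le]; ring
  have := le_add_deriv_add_of_deriv_sub_le hφ hgrowth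
  simp only [zero_smul, add_zero, one_smul, v, add_sub_cancel] at this
  linarith

theorem lt_of_armijo_fail {L σ c₁ t Δ δ : ℝ} (hL : 0 < L) (hσ : σ < 1) (hδ : 0 < δ)
    (ht : 0 < t) (hdec : Δ ≤ -(c₁ / 2) * δ)
    (hfail : 2 * σ * t * Δ < 2 * t * Δ + 2 * L * t ^ 2 * δ) :
    (1 - σ) * c₁ / (2 * L) < t := by
  have hΔ : (1 - σ) * -Δ < L * t * δ := by nlinarith
  have hc : (1 - σ) * (c₁ / 2) * δ < L * t * δ := by nlinarith
  rw [div_lt_iff₀ (by positivity)]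
  nlinarith [lt_of_mul_lt_mul_right hc hδ.le]

theorem stmt4_general {n m : ℕ} (L : ℝ) (hL : 0 < L)
    (f : EuclideanSpace ℝ (Fin n) → ℝ)
    (hf : Differentiable ℝ f)
    (hlip : ∀ x y : EuclideanSpace ℝ (Fin n),
        ‖gradient f x - gradient f y‖ ≤ L * ‖x - y‖)
    (g : EuclideanSpace ℝ (Fin m) → EReal)
    (hg_ne_bot : ∀ z, g z ≠ ⊥)
    (hg_convex : ∀ u w : EuclideanSpace ℝ (Fin m), ∀ t : ℝ, 0 ≤ t → t ≤ 1 →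
        g (t • u + (1 - t) • w) ≤ (t : EReal) * g u + ((1 - t : ℝ) : EReal) * g w)
    (A : Matrix (Fin m) (Fin n) ℝ)
    (F : EuclideanSpace ℝ (Fin n) → EReal)
    (hF : ∀ z, F z = ((f z : ℝ) : EReal) + g (Matrix.toEuclideanLin A z))
    (σ c₁ : ℝ) (hσ1 : σ < 1)
    (x d : EuclideanSpace ℝ (Fin n)) (hd : d ≠ 0)
    (hgx : g (Matrix.toEuclideanLin A x) ≠ ⊤)
    (hgxd : g (Matrix.toEuclideanLin A x + Matrix.toEuclideanLin A d) ≠ ⊤)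
    (Δ : EReal)
    (hΔ : Δ = ((⟪gradient f x, d⟫ : ℝ) : EReal)
        + g (Matrix.toEuclideanLin A x + Matrix.toEuclideanLin A d)
        - g (Matrix.toEuclideanLin A x))
    (hdec : Δ ≤ ((-(c₁ / 2) * ‖d‖ ^ 2 : ℝ) : EReal))
    (t : ℝ) (ht0 : 0 < t) (ht1 : t ≤ 1 / 2)
    (harmijo_fail : F (x + (2 * t) • d) - F x > ((2 * σ * t : ℝ) : EReal) * Δ) :
    t > (1 - σ) * c₁ / (2 * L) := by
  set Ax := Matrix.toEuclideanLin A x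
  set Ad := Matrix.toEuclideanLin A d
  obtain ⟨a, ha⟩ : ∃ a : ℝ, g Ax = a := ⟨_, (EReal.coe_toReal hgx (hg_ne_bot _)).symm⟩
  obtain ⟨b, hb⟩ : ∃ b : ℝ, g (Ax + Ad) = b := ⟨_, (EReal.coe_toReal hgxd (hg_ne_bot _)).symm⟩
  have hconv :
      g (Matrix.toEuclideanLin A (x + (2 * t) • d)) ≤ (2 * t * b + (1 - 2 * t) * a : ℝ) := by
    have h := hg_convex (Ax + Ad) Ax (2 * t) (by linarith) (by linarith)
    rw [ha, hb] at h
    convert h using 2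
    · rw [map_add, map_smul]; module
    · norm_cast
  obtain ⟨c, hc⟩ : ∃ c : ℝ, g (Matrix.toEuclideanLin A (x + (2 * t) • d)) = c :=
    ⟨_, (EReal.coe_toReal (hconv.trans_lt (EReal.coe_lt_top _)).ne (hg_ne_bot _)).symm⟩
  rw [hc] at hconv
  rw [ha, hb] at hΔ
  rw [hF, hF, hc, ha] at harmijo_fail
  subst hΔ
  norm_cast at hconv hdec harmijo_fail
  have hdesc := le_add_inner_gradient_add_of_lipschitz_gradient hf hlip x (x + (2 * t) • d)
  rw [add_sub_cancel_left, real_inner_smul_right, norm_smul, Real.norm_of_nonneg (by linarith)]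
    at hdesc
  refine lt_of_armijo_fail hL hσ1 (pow_pos (norm_pos_iff.2 hd) 2) ht0 hdec ?_
  linarith

/-- If `f` is `L`-smooth (`L > 0`), the sufficient decrease condition
`Δ ≤ −(c₁/2)‖d‖²` holds with `d ≠ 0`, and the Armijo condition fails at stepsize `2t` for some
`t ∈ (0, 1/2]`, i.e. `F(x + 2t·d) − F(x) > 2σt·Δ`, then `t > (1 − σ)c₁/(2L)`. -/
theorem stmt4 {n m : ℕ} (L : ℝ) (hL : 0 < L)
    (f : EuclideanSpace ℝ (Fin n) → ℝ)
    (hf : Differentiable ℝ f)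
    (hlip : ∀ x y : EuclideanSpace ℝ (Fin n),
        ‖gradient f x - gradient f y‖ ≤ L * ‖x - y‖)
    (g : EuclideanSpace ℝ (Fin m) → EReal)
    (hg_proper : ∃ z, g z ≠ ⊤)
    (hg_ne_bot : ∀ z, g z ≠ ⊥)
    (hg_convex : ∀ u w : EuclideanSpace ℝ (Fin m), ∀ t : ℝ, 0 ≤ t → t ≤ 1 →
        g (t • u + (1 - t) • w) ≤ (t : EReal) * g u + ((1 - t : ℝ) : EReal) * g w)
    (A : Matrix (Fin m) (Fin n) ℝ)
    (F : EuclideanSpace ℝ (Fin n) → EReal)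
    (hF : ∀ z, F z = ((f z : ℝ) : EReal) + g (Matrix.toEuclideanLin A z))
    (σ c₁ : ℝ) (hσ0 : 0 < σ) (hσ1 : σ < 1) (hc₁ : 0 < c₁)
    (x d : EuclideanSpace ℝ (Fin n)) (hd : d ≠ 0)
    (hgx : g (Matrix.toEuclideanLin A x) ≠ ⊤)
    (hgxd : g (Matrix.toEuclideanLin A x + Matrix.toEuclideanLin A d) ≠ ⊤)
    (Δ : EReal)
    (hΔ : Δ = ((⟪gradient f x, d⟫ : ℝ) : EReal)
        + g (Matrix.toEuclideanLin A x + Matrix.toEuclideanLin A d)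
        - g (Matrix.toEuclideanLin A x))
    (hdec : Δ ≤ ((-(c₁ / 2) * ‖d‖ ^ 2 : ℝ) : EReal))
    (t : ℝ) (ht0 : 0 < t) (ht1 : t ≤ 1 / 2)
    (harmijo_fail : F (x + (2 * t) • d) - F x > ((2 * σ * t : ℝ) : EReal) * Δ) :
    t > (1 - σ) * c₁ / (2 * L) :=
  stmt4_general L hL f hf hlip g hg_ne_bot hg_convex A F hF σ c₁ hσ1 x d hd hgx hgxd Δ hΔ hdec t ht0
    ht1 harmijo_fail
end

section
/- Let F : ℝ^n → ℝ ∪ {+∞} be lower semicontinuous, and let x⁰ ∈ ℝ^n be such that the level set L_F(x⁰) = {x : F(x) ≤ F(x⁰)} is nonempty and compact. Let {x^k} ⊂ ℝ^n and {v_k} ⊂ ℝ^n be sequences and let σ > 0, c > 0, t_min > 0 and stepsizes t_k ≥ t_min be such that for every k, F(x^{k+1}) − F(x^k) ≤ −σ·c·t_k·‖v_k‖². Then: (i) x^k ∈ L_F(x⁰) for all k and {x^k} has at least one accumulation point, and (ii) v_k → 0 as k → ∞. -/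
open Filter Topology

/-!
Along the iterates the values `F (x k)` are finite and decrease by at least
`σ c t_min ‖v_k‖²` per step, so the iterates stay in the compact level set. There the lower
semicontinuous `F` attains its minimum, hence the values are bounded below and converge; the
decrements then tend to `0`, which forces `v_k → 0`.
-/

theorem EReal.ne_top_of_sub_le_coe {a b : EReal} {r : ℝ} (hb : b ≠ ⊤) (h : a - b ≤ r) :
    a ≠ ⊤ := by
  rintro rfl
  rw [EReal.top_sub hb, top_le_iff] at h
  exact EReal.coe_ne_top r h

theorem EReal.exists_real_seq_of_sub_le {u : ℕ → EReal} {r : ℕ → ℝ} (h0 : u 0 ≠ ⊤)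
    (hbot : ∀ k, u k ≠ ⊥) (hdec : ∀ k, u (k + 1) - u k ≤ ((-r k : ℝ) : EReal)) :
    ∃ f : ℕ → ℝ, (∀ k, (f k : EReal) = u k) ∧ ∀ k, f (k + 1) ≤ f k - r k := by
  have htop : ∀ k, u k ≠ ⊤ := by
    intro k
    induction k with
    | zero => exact h0
    | succ k ih => exact EReal.ne_top_of_sub_le_coe ih (hdec k)
  have hcoe : ∀ k, ((u k).toReal : EReal) = u k := fun k => EReal.coe_toReal (htop k) (hbot k)
  refine ⟨fun k => (u k).toReal, hcoe, fun k => ?_⟩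
  have hstep := hdec k
  rw [← hcoe k, ← hcoe (k + 1), ← EReal.coe_sub, EReal.coe_le_coe_iff] at hstep
  linarith

theorem IsCompact.exists_forall_coe_le_of_lowerSemicontinuousOn {α : Type*} [TopologicalSpace α]
    {K : Set α} {F : α → EReal} (hK : IsCompact K) (hF : LowerSemicontinuousOn F K)
    (hbot : ∀ y ∈ K, F y ≠ ⊥) : ∃ m : ℝ, ∀ y ∈ K, (m : EReal) ≤ F y := by
  rcases K.eq_empty_or_nonempty with rfl | hne
  · exact ⟨0, by simp⟩
  obtain ⟨a, ha, hmin⟩ := hF.exists_isMinOn hne hK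
  exact ⟨(F a).toReal, fun y hy => (EReal.coe_toReal_le (hbot a ha)).trans (hmin hy)⟩

theorem tendsto_zero_of_le_sub_of_bddBelow {f d : ℕ → ℝ} (hbdd : BddBelow (Set.range f))
    (hd : ∀ k, 0 ≤ d k) (hdec : ∀ k, f (k + 1) ≤ f k - d k) : Tendsto d atTop (𝓝 0) := by
  have hanti : Antitone f := antitone_nat_of_succ_le fun k => (hdec k).trans (sub_le_self _ (hd k))
  have hlim := tendsto_atTop_ciInf hanti hbdd
  have hgap : Tendsto (fun k => f k - f (k + 1)) atTop (𝓝 0) := by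
    simpa using hlim.sub (hlim.comp (tendsto_add_atTop_nat 1))
  exact squeeze_zero hd (fun k => by linarith [hdec k]) hgap

theorem tendsto_zero_of_const_mul_norm_sq {ι E : Type*} [SeminormedAddCommGroup E] {l : Filter ι}
    {v : ι → E} {C : ℝ} (hC : 0 < C) (h : Tendsto (fun k => C * ‖v k‖ ^ 2) l (𝓝 0)) :
    Tendsto v l (𝓝 0) := by
  rw [tendsto_zero_iff_norm_tendsto_zero]
  simpa [inv_mul_cancel_left₀ hC.ne', Real.sqrt_sq (norm_nonneg _)] using (h.const_mul C⁻¹).sqrt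

theorem stmt5_general {n : ℕ}
    (F : EuclideanSpace ℝ (Fin n) → EReal)
    (hF_lsc : LowerSemicontinuous F)
    (hF_ne_bot : ∀ z, F z ≠ ⊥)
    (x v : ℕ → EuclideanSpace ℝ (Fin n))
    (hx0_fin : F (x 0) ≠ ⊤)
    (hlev_cpt : IsCompact ({y | F y ≤ F (x 0)} : Set (EuclideanSpace ℝ (Fin n))))
    (σ c tmin : ℝ) (hσ : 0 < σ) (hc : 0 < c) (htmin : 0 < tmin)
    (t : ℕ → ℝ) (ht : ∀ k, tmin ≤ t k)
    (hdec : ∀ k, F (x (k + 1)) - F (x k)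
        ≤ ((-(σ * c * t k * ‖v k‖ ^ 2) : ℝ) : EReal)) :
    (∀ k, F (x k) ≤ F (x 0)) ∧
    (∃ a : EuclideanSpace ℝ (Fin n), ∃ φ : ℕ → ℕ, StrictMono φ ∧
        Tendsto (x ∘ φ) atTop (nhds a)) ∧
    Tendsto v atTop (nhds 0) := by
  obtain ⟨f, hfF, hf⟩ := EReal.exists_real_seq_of_sub_le (r := fun k => σ * c * t k * ‖v k‖ ^ 2)
    hx0_fin (fun k => hF_ne_bot (x k)) hdec
  set d : ℕ → ℝ := fun k => σ * c * tmin * ‖v k‖ ^ 2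
  have hd : ∀ k, 0 ≤ d k := fun k => by positivity
  have hdesc : ∀ k, f (k + 1) ≤ f k - d k := fun k => by
    have : d k ≤ σ * c * t k * ‖v k‖ ^ 2 := by
      dsimp only [d]
      gcongr
      exact ht k
    linarith [hf k]
  have hanti : Antitone f := antitone_nat_of_succ_le fun k => (hdesc k).trans (sub_le_self _ (hd k))
  have hlevel : ∀ k, F (x k) ≤ F (x 0) := fun k => by
    rw [← hfF k, ← hfF 0]
    exact EReal.coe_le_coe_iff.2 (hanti k.zero_le)
  obtain ⟨a, -, φ, hφ, hlim⟩ := hlev_cpt.tendsto_subseq hlevel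
  obtain ⟨m, hm⟩ := hlev_cpt.exists_forall_coe_le_of_lowerSemicontinuousOn
    (hF_lsc.lowerSemicontinuousOn _) fun y _ => hF_ne_bot y
  have hbdd : BddBelow (Set.range f) := ⟨m, by
    rintro _ ⟨k, rfl⟩
    exact EReal.coe_le_coe_iff.1 ((hfF k).symm ▸ hm (x k) (hlevel k))⟩
  exact ⟨hlevel, ⟨a, φ, hφ, hlim⟩, tendsto_zero_of_const_mul_norm_sq (by positivity)
    (tendsto_zero_of_le_sub_of_bddBelow hbdd hd hdesc)⟩

/-- If `F` is lower semicontinuous with nonempty compact level set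
`L_F(x⁰) = {x : F x ≤ F x⁰}` (with `F x⁰` finite), and the sequences `{x^k}`, `{v_k}` with
stepsizes `t_k ≥ t_min > 0` satisfy `F(x^{k+1}) − F(x^k) ≤ −σ·c·t_k·‖v_k‖²`, then every iterate
stays in the level set, the sequence `{x^k}` has an accumulation point, and `v_k → 0`. -/
theorem stmt5 {n : ℕ}
    (F : EuclideanSpace ℝ (Fin n) → EReal)
    (hF_lsc : LowerSemicontinuous F)
    (hF_ne_bot : ∀ z, F z ≠ ⊥)
    (x v : ℕ → EuclideanSpace ℝ (Fin n))
    (hx0_fin : F (x 0) ≠ ⊤)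
    (hlev_ne : ({y | F y ≤ F (x 0)} : Set (EuclideanSpace ℝ (Fin n))).Nonempty)
    (hlev_cpt : IsCompact ({y | F y ≤ F (x 0)} : Set (EuclideanSpace ℝ (Fin n))))
    (σ c tmin : ℝ) (hσ : 0 < σ) (hc : 0 < c) (htmin : 0 < tmin)
    (t : ℕ → ℝ) (ht : ∀ k, tmin ≤ t k)
    (hdec : ∀ k, F (x (k + 1)) - F (x k)
        ≤ ((-(σ * c * t k * ‖v k‖ ^ 2) : ℝ) : EReal)) :
    (∀ k, F (x k) ≤ F (x 0)) ∧
    (∃ a : EuclideanSpace ℝ (Fin n), ∃ φ : ℕ → ℕ, StrictMono φ ∧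
        Tendsto (x ∘ φ) atTop (nhds a)) ∧
    Tendsto v atTop (nhds 0) :=
  stmt5_general F hF_lsc hF_ne_bot x v hx0_fin hlev_cpt σ c tmin hσ hc htmin t ht hdec
end

section
/- Let m < n, let U ∈ ℝ^{m×m} and V ∈ ℝ^{n×n} be orthogonal matrices, let Σ ∈ ℝ^{m×m} be an invertible diagonal matrix, and let A = U[Σ, 0_{m×(n−m)}]Vᵀ ∈ ℝ^{m×n}. Let P̃ ∈ ℝ^{(n−m)×(n−m)} be symmetric positive definite and define P = AᵀA + V·blockdiag(0_{m×m}, P̃)·Vᵀ ∈ ℝ^{n×n}. Then P is symmetric positive definite and A P⁻¹ Aᵀ = I_m. -/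
open Matrix

/-! In the coordinates given by the orthogonal matrix `V`, both `AᵀA` and `V·blockdiag(0, P̃)·Vᵀ`
are block diagonal, so `P = V·blockdiag(ΣᵀΣ, P̃)·Vᵀ` is congruent to a positive definite
block-diagonal matrix, and `A P⁻¹ Aᵀ = U Σ (ΣᵀΣ)⁻¹ Σᵀ Uᵀ = U Uᵀ = I`. -/

namespace Matrix

section Blocks

variable {l m n : Type*} {α : Type*} [CommSemiring α]

theorem transpose_fromCols_zero_mul_self [Fintype l] (S : Matrix l m α) :
    (fromCols S (0 : Matrix l n α))ᵀ * fromCols S (0 : Matrix l n α) =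
      fromBlocks (Sᵀ * S) 0 0 0 := by
  rw [transpose_fromCols, fromRows_mul_fromCols]
  simp

theorem fromCols_zero_mul_fromBlocks_mul_transpose [Fintype m] [Fintype n] (S : Matrix l m α)
    (X : Matrix m m α) (Y : Matrix m n α) (Z : Matrix n m α) (W : Matrix n n α) :
    fromCols S (0 : Matrix l n α) * fromBlocks X Y Z W * (fromCols S (0 : Matrix l n α))ᵀ =
      S * X * Sᵀ := by
  rw [fromCols_mul_fromBlocks, transpose_fromCols, fromCols_mul_fromRows]
  simp

end Blocks

section Inverse

variable {m n : Type*} [Fintype m] [Fintype n] [DecidableEq m] [DecidableEq n]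
  {α : Type*} [CommRing α]

theorem mul_inv_transpose_mul_self_mul_transpose {S : Matrix m m α} (hS : IsUnit S.det) :
    S * (Sᵀ * S)⁻¹ * Sᵀ = 1 := by
  rw [mul_inv_rev, ← Matrix.mul_assoc, mul_nonsing_inv _ hS, Matrix.one_mul,
    nonsing_inv_mul _ (by rwa [det_transpose])]

theorem inv_mul_mul_transpose_of_transpose_mul_self {V : Matrix n n α} (hV : Vᵀ * V = 1)
    (D : Matrix n n α) : (V * D * Vᵀ)⁻¹ = V * D⁻¹ * Vᵀ := by
  rw [mul_inv_rev, mul_inv_rev, inv_eq_right_inv hV, inv_eq_left_inv hV, Matrix.mul_assoc]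

theorem inv_fromBlocks_zero_zero {A : Matrix m m α} {D : Matrix n n α}
    (hAD : IsUnit A ↔ IsUnit D) :
    (fromBlocks A 0 0 D)⁻¹ = fromBlocks A⁻¹ 0 0 D⁻¹ := by
  simp [inv_fromBlocks_zero₂₁_of_isUnit_iff A 0 D hAD]

end Inverse

section PosDef

open scoped ComplexOrder

variable {m n : Type*} [Fintype m] [Fintype n]

theorem PosDef.fromBlocks_zero_zero {𝕜 : Type*} [RCLike 𝕜] {A : Matrix m m 𝕜} {D : Matrix n n 𝕜}
    (hA : A.PosDef) (hD : D.PosDef) : (fromBlocks A 0 0 D).PosDef := by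
  refine .of_dotProduct_mulVec_pos ?_ fun x hx => ?_
  · rw [IsHermitian, fromBlocks_conjTranspose, hA.1.eq, hD.1.eq]
    simp
  have hsplit : star x ⬝ᵥ (fromBlocks A 0 0 D *ᵥ x) =
      star (x ∘ Sum.inl) ⬝ᵥ (A *ᵥ (x ∘ Sum.inl)) +
        star (x ∘ Sum.inr) ⬝ᵥ (D *ᵥ (x ∘ Sum.inr)) := by
    rw [fromBlocks_mulVec, dotProduct_block]
    simp [Function.comp_def, Pi.star_def]
  rw [hsplit]
  by_cases hl : x ∘ Sum.inl = 0
  · have hr : x ∘ Sum.inr ≠ 0 := fun hr => hx (funext <| Sum.rec (congrFun hl) (congrFun hr))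
    exact add_pos_of_nonneg_of_pos (hA.posSemidef.dotProduct_mulVec_nonneg _)
      (hD.dotProduct_mulVec_pos hr)
  · exact add_pos_of_pos_of_nonneg (hA.dotProduct_mulVec_pos hl)
      (hD.posSemidef.dotProduct_mulVec_nonneg _)

theorem PosDef.transpose_mul_self_of_isUnit_det [DecidableEq m] {S : Matrix m m ℝ}
    (hS : IsUnit S.det) : (Sᵀ * S).PosDef := by
  simpa using PosDef.conjTranspose_mul_self S (mulVec_injective_iff_isUnit.2 <|
    (isUnit_iff_isUnit_det S).2 hS)

theorem PosDef.mul_mul_transpose_of_isUnit_det [DecidableEq n] {D V : Matrix n n ℝ}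
    (hD : D.PosDef) (hV : IsUnit V.det) : (V * D * Vᵀ).PosDef := by
  simpa [star_eq_conjTranspose, conjTranspose_eq_transpose_of_trivial] using
    ((isUnit_iff_isUnit_det V).2 hV).posDef_star_right_conjugate_iff.2 hD

end PosDef

end Matrix

theorem stmt8_general {m p : ℕ}
    (U : Matrix (Fin m) (Fin m) ℝ) (hU : Uᵀ * U = 1)
    (V : Matrix (Fin m ⊕ Fin p) (Fin m ⊕ Fin p) ℝ) (hV : Vᵀ * V = 1)
    (S : Matrix (Fin m) (Fin m) ℝ) (hSinv : IsUnit S.det)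
    (A : Matrix (Fin m) (Fin m ⊕ Fin p) ℝ)
    (hA : A = U * Matrix.fromCols S 0 * Vᵀ)
    (Pt : Matrix (Fin p) (Fin p) ℝ) (hPt : Pt.PosDef)
    (P : Matrix (Fin m ⊕ Fin p) (Fin m ⊕ Fin p) ℝ)
    (hP : P = Aᵀ * A + V * Matrix.fromBlocks 0 0 0 Pt * Vᵀ) :
    P.PosDef ∧ A * P⁻¹ * Aᵀ = 1 := by
  set W : Matrix (Fin m) (Fin m ⊕ Fin p) ℝ := fromCols S 0
  -- `hA` is elaborated with the (defeq) `CStarMatrix` multiplication; restate it with `Matrix`'s.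
  replace hA : A = U * W * Vᵀ := hA
  have hStS : (Sᵀ * S).PosDef := PosDef.transpose_mul_self_of_isUnit_det hSinv
  set D := fromBlocks (Sᵀ * S) 0 0 Pt
  have hPD : P = V * D * Vᵀ := by
    have hAtA : Aᵀ * A = V * fromBlocks (Sᵀ * S) 0 0 0 * Vᵀ := by
      rw [hA, ← transpose_fromCols_zero_mul_self]
      simp only [transpose_mul, transpose_transpose, Matrix.mul_assoc]
      rw [← Matrix.mul_assoc Uᵀ U, hU, Matrix.one_mul]
    rw [hP, hAtA, ← Matrix.add_mul, ← Matrix.mul_add, fromBlocks_add]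
    simp [D]
  refine ⟨hPD ▸ (hStS.fromBlocks_zero_zero hPt).mul_mul_transpose_of_isUnit_det
    (isUnit_det_of_left_inverse hV), ?_⟩
  have hDinv : D⁻¹ = fromBlocks (Sᵀ * S)⁻¹ 0 0 Pt⁻¹ :=
    inv_fromBlocks_zero_zero (iff_of_true hStS.isUnit hPt.isUnit)
  calc A * P⁻¹ * Aᵀ = U * (W * D⁻¹ * Wᵀ) * Uᵀ := by
        rw [hPD, inv_mul_mul_transpose_of_transpose_mul_self hV, hA]
        simp only [transpose_mul, transpose_transpose, Matrix.mul_assoc]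
        rw [← Matrix.mul_assoc Vᵀ V, hV, Matrix.one_mul, ← Matrix.mul_assoc Vᵀ V, hV, Matrix.one_mul]
    _ = 1 := by
        rw [hDinv, fromCols_zero_mul_fromBlocks_mul_transpose,
          mul_inv_transpose_mul_self_mul_transpose hSinv, Matrix.mul_one, mul_eq_one_comm.mp hU]

/-- For a full-row-rank matrix `A = U[Σ, 0]Vᵀ` (SVD, `m < n`, here the column
index type `Fin m ⊕ Fin p` with `p = n − m > 0` realizes `ℝⁿ`), and
`P = AᵀA + V·blockdiag(0, P̃)·Vᵀ` with `P̃` symmetric positive definite, the matrix `P` is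
symmetric positive definite and `A P⁻¹ Aᵀ = I_m`. -/
theorem stmt8 {m p : ℕ} (hp : 0 < p)
    (U : Matrix (Fin m) (Fin m) ℝ) (hU : Uᵀ * U = 1)
    (V : Matrix (Fin m ⊕ Fin p) (Fin m ⊕ Fin p) ℝ) (hV : Vᵀ * V = 1)
    (S : Matrix (Fin m) (Fin m) ℝ) (hSdiag : S.IsDiag) (hSinv : IsUnit S.det)
    (A : Matrix (Fin m) (Fin m ⊕ Fin p) ℝ)
    (hA : A = U * Matrix.fromCols S 0 * Vᵀ)
    (Pt : Matrix (Fin p) (Fin p) ℝ) (hPt : Pt.PosDef)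
    (P : Matrix (Fin m ⊕ Fin p) (Fin m ⊕ Fin p) ℝ)
    (hP : P = Aᵀ * A + V * Matrix.fromBlocks 0 0 0 Pt * Vᵀ) :
    P.PosDef ∧ A * P⁻¹ * Aᵀ = 1 :=
  stmt8_general U hU V hV S hSinv A hA Pt hPt P hP
end

section
/- Let m < n, let U ∈ ℝ^{m×m} and V ∈ ℝ^{n×n} be orthogonal matrices, let Σ ∈ ℝ^{m×m} be an invertible diagonal matrix, and let A = U[Σ, 0_{m×(n−m)}]Vᵀ ∈ ℝ^{m×n}. Let S ∈ ℝ^{(n−m)×(n−m)} be invertible and define M = [A; 0_{(n−m)×n}] + blockdiag(0_{m×m}, S)·Vᵀ ∈ ℝ^{n×n} (the first term stacks A on top of an (n−m)×n zero block). Let D = diag(d₁,…,d_n) with d_i > 0 for all i, and set P = MᵀDM. Then P is symmetric positive definite and A P⁻¹ Aᵀ = diag(d₁,…,d_m)⁻¹. -/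
/-!
Since `A = U[S, 0]Vᵀ`, the matrix `M` factors as `blockdiag(U S, T)·Vᵀ`, so it is invertible and
`P = MᵀDM` is a congruence of the positive definite `D`. Moreover `A` consists of the first `m`
rows of `M`, so `A P⁻¹ Aᵀ` is the leading `m × m` block of `M (MᵀDM)⁻¹ Mᵀ = D⁻¹`.
-/

open Matrix

namespace Matrix

variable {l m n p K : Type*} [Fintype n]

theorem inv_diagonal_eq_diagonal_inv [DecidableEq n] [Field K] {d : n → K} (hd : ∀ i, d i ≠ 0) :
    (diagonal d)⁻¹ = diagonal fun i => (d i)⁻¹ :=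
  inv_eq_right_inv <| by
    rw [diagonal_mul_diagonal, ← diagonal_one]
    exact congrArg diagonal (funext fun i => mul_inv_cancel₀ (hd i))

theorem submatrix_inv_diagonal [DecidableEq n] [Field K] [Fintype l] [DecidableEq l] {d : n → K}
    (hd : ∀ i, d i ≠ 0) {e : l → n} (he : Function.Injective e) :
    ((diagonal d)⁻¹).submatrix e e = (diagonal (d ∘ e))⁻¹ := by
  rw [inv_diagonal_eq_diagonal_inv hd, inv_diagonal_eq_diagonal_inv (d := d ∘ e) fun i => hd (e i),
    submatrix_diagonal _ _ he]
  rfl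

theorem mul_inv_transpose_mul_mul_mul_transpose [DecidableEq n] [CommRing K] {M : Matrix n n K}
    (hM : IsUnit M.det) (D : Matrix n n K) : M * (Mᵀ * D * M)⁻¹ * Mᵀ = D⁻¹ := by
  have hMt : IsUnit Mᵀ.det := by rwa [det_transpose]
  rw [mul_inv_rev, mul_inv_rev, Matrix.mul_assoc, Matrix.mul_assoc, Matrix.mul_assoc,
    nonsing_inv_mul _ hMt, Matrix.mul_one, mul_nonsing_inv_cancel_left _ _ hM]

theorem submatrix_mul_mul_transpose_submatrix [Mul K] [AddCommMonoid K] (M X : Matrix n n K) (e : l → n) :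
    M.submatrix e id * X * (M.submatrix e id)ᵀ = (M * X * Mᵀ).submatrix e e := by
  rw [transpose_submatrix, submatrix_mul _ _ _ id _ Function.bijective_id,
    submatrix_mul _ _ _ id _ Function.bijective_id, submatrix_id_id]

theorem transpose_mul_diagonal_mul_posDef [DecidableEq n] {M : Matrix n n ℝ} (hM : IsUnit M.det) {d : n → ℝ}
    (hd : ∀ i, 0 < d i) : (Mᵀ * diagonal d * M).PosDef :=
  (PosDef.diagonal hd).conjTranspose_mul_mul_same <|
    mulVec_injective_iff_isUnit.mpr <| (isUnit_iff_isUnit_det M).mpr hM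

variable [Fintype m] [Fintype p]

theorem fromRows_mul_fromCols_add_fromBlocks_mul [Semiring K] (U S : Matrix m m K)
    (T : Matrix p p K) (W : Matrix (m ⊕ p) (m ⊕ p) K) :
    fromRows (U * fromCols S (0 : Matrix m p K) * W) 0 + fromBlocks 0 0 0 T * W =
      fromBlocks (U * S) 0 0 T * W := by
  ext (i | i) j <;> simp [-mul_fromCols, mul_apply, Fintype.sum_sum_type, Finset.sum_mul]

theorem submatrix_inl_fromRows_add_fromBlocks_mul [Semiring K] (A : Matrix m (m ⊕ p) K)
    (T : Matrix p p K) (W : Matrix (m ⊕ p) (m ⊕ p) K) :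
    (fromRows A 0 + fromBlocks 0 0 0 T * W).submatrix Sum.inl id = A := by
  ext i j
  simp [mul_apply]

end Matrix

theorem stmt9_general {m p : ℕ}
    (U : Matrix (Fin m) (Fin m) ℝ) (hU : Uᵀ * U = 1)
    (V : Matrix (Fin m ⊕ Fin p) (Fin m ⊕ Fin p) ℝ) (hV : Vᵀ * V = 1)
    (S : Matrix (Fin m) (Fin m) ℝ) (hSinv : IsUnit S.det)
    (A : Matrix (Fin m) (Fin m ⊕ Fin p) ℝ)
    (hA : A = U * Matrix.fromCols S 0 * Vᵀ)
    (T : Matrix (Fin p) (Fin p) ℝ) (hT : IsUnit T.det)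
    (M : Matrix (Fin m ⊕ Fin p) (Fin m ⊕ Fin p) ℝ)
    (hM : M = Matrix.fromRows A 0 + Matrix.fromBlocks 0 0 0 T * Vᵀ)
    (d : Fin m ⊕ Fin p → ℝ) (hd : ∀ i, 0 < d i)
    (P : Matrix (Fin m ⊕ Fin p) (Fin m ⊕ Fin p) ℝ)
    (hP : P = Mᵀ * Matrix.diagonal d * M) :
    P.PosDef ∧
    A * P⁻¹ * Aᵀ = (Matrix.diagonal fun i : Fin m => d (Sum.inl i))⁻¹ := by
  have hM_factor : M = fromBlocks (U * S) 0 0 T * Vᵀ := by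
    rw [hM, hA]
    exact fromRows_mul_fromCols_add_fromBlocks_mul U S T Vᵀ
  have hM_det : IsUnit M.det := by
    rw [hM_factor, det_mul, det_fromBlocks_zero₂₁, det_mul, det_transpose]
    exact (((isUnit_det_of_left_inverse hU).mul hSinv).mul hT).mul
      (isUnit_det_of_left_inverse hV)
  have hA_rows : A = M.submatrix Sum.inl id := by
    rw [hM, submatrix_inl_fromRows_add_fromBlocks_mul]
  subst hP
  refine ⟨transpose_mul_diagonal_mul_posDef hM_det hd, ?_⟩
  rw [hA_rows, submatrix_mul_mul_transpose_submatrix,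
    mul_inv_transpose_mul_mul_mul_transpose hM_det, submatrix_inv_diagonal (fun i => (hd i).ne') Sum.inl_injective]
  rfl

/-- For a full-row-rank matrix `A = U[Σ, 0]Vᵀ` (SVD, `m < n`, here the column
index type `Fin m ⊕ Fin p` with `p = n − m > 0` realizes `ℝⁿ`), with
`M = [A; 0] + blockdiag(0, S)·Vᵀ` (`S` invertible), a positive diagonal matrix
`D = diag(d₁,…,d_n)` and `P = MᵀDM`, the matrix `P` is symmetric positive definite and
`A P⁻¹ Aᵀ = diag(d₁,…,d_m)⁻¹`. -/
theorem stmt9 {m p : ℕ} (hp : 0 < p)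
    (U : Matrix (Fin m) (Fin m) ℝ) (hU : Uᵀ * U = 1)
    (V : Matrix (Fin m ⊕ Fin p) (Fin m ⊕ Fin p) ℝ) (hV : Vᵀ * V = 1)
    (S : Matrix (Fin m) (Fin m) ℝ) (hSdiag : S.IsDiag) (hSinv : IsUnit S.det)
    (A : Matrix (Fin m) (Fin m ⊕ Fin p) ℝ)
    (hA : A = U * Matrix.fromCols S 0 * Vᵀ)
    (T : Matrix (Fin p) (Fin p) ℝ) (hT : IsUnit T.det)
    (M : Matrix (Fin m ⊕ Fin p) (Fin m ⊕ Fin p) ℝ)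
    (hM : M = Matrix.fromRows A 0 + Matrix.fromBlocks 0 0 0 T * Vᵀ)
    (d : Fin m ⊕ Fin p → ℝ) (hd : ∀ i, 0 < d i)
    (P : Matrix (Fin m ⊕ Fin p) (Fin m ⊕ Fin p) ℝ)
    (hP : P = Mᵀ * Matrix.diagonal d * M) :
    P.PosDef ∧
    A * P⁻¹ * Aᵀ = (Matrix.diagonal fun i : Fin m => d (Sum.inl i))⁻¹ :=
  stmt9_general U hU V hV S hSinv A hA T hT M hM d hd P hP
end

section
/- Let f : ℝ^n → ℝ be differentiable at x, let g : ℝ^m → ℝ ∪ {+∞} be proper, convex and lower semicontinuous, let A ∈ ℝ^{m×n}, and let P ∈ ℝ^{n×n} be symmetric positive definite. Define a = Ax − AP⁻¹∇f(x) and let g*(y) = sup_{z ∈ ℝ^m} (⟨z, y⟩ − g(z)) be the Fenchel conjugate of g. Suppose y* ∈ ℝ^m is a minimizer of the dual problem y ↦ (1/2)yᵀ(AP⁻¹Aᵀ)y + g*(y) − aᵀy over ℝ^m. Then x̃ = x − P⁻¹(∇f(x) + Aᵀy*) is a minimizer of the primal subproblem x' ↦ ∇f(x)ᵀ(x' − x)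 + g(Ax') + (1/2)(x'−x)ᵀP(x'−x) over ℝ^n. -/
/-!
The dual minimizer `y*` satisfies the first-order condition `z* := a - A P⁻¹ Aᵀ y* ∈ ∂g*(y*)`:
compare the dual objective at `y*` and at `y* + t (y - y*)`, use the convexity of `g*` and let
`t → 0`. By the Fenchel–Moreau theorem `g ≤ g**`, proved by separating a point from the closed
convex epigraph of `g`, this gives the Fenchel–Young equality `g z* + g* y* = ⟪z*, y*⟫`.
Finally `A x̃ = z*`, and the Lagrangian `x' ↦ ∇f(x)ᵀ(x' - x) + ½‖x' - x‖²_P + ⟪A x', y*⟫ - g* y*`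
is below the primal objective (Fenchel–Young), is minimized at `x̃` because
`P (x̃ - x) = -(∇f(x) + Aᵀ y*)`, and agrees with the primal objective at `x̃`.
-/

open Matrix
open scoped RealInnerProductSpace

open Filter Set Topology

-- Only real heights, so that the epigraph lives in a normed space where separation applies.
def realEpigraph {E : Type*} (g : E → EReal) : Set (E × ℝ) := {p | g p.1 ≤ p.2}

theorem LowerSemicontinuous.isClosed_realEpigraph {E : Type*} [TopologicalSpace E]
    {g : E → EReal} (hg : LowerSemicontinuous g) : IsClosed (realEpigraph g) :=
  hg.isClosed_epigraph.preimage
    (continuous_fst.prodMk (continuous_coe_real_ereal.comp continuous_snd))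

theorem convex_realEpigraph {E : Type*} [AddCommGroup E] [Module ℝ E] {g : E → EReal}
    (hg : ∀ u w : E, ∀ t : ℝ, 0 ≤ t → t ≤ 1 →
        g (t • u + (1 - t) • w) ≤ (t : EReal) * g u + ((1 - t : ℝ) : EReal) * g w) :
    Convex ℝ (realEpigraph g) := by
  rintro ⟨u, r⟩ hu ⟨w, q⟩ hw a b ha hb hab
  obtain rfl : b = 1 - a := by linarith
  calc g (a • u + (1 - a) • w) ≤ (a : EReal) * g u + ((1 - a : ℝ) : EReal) * g w :=
        hg u w a ha (by linarith)
    _ ≤ (a : EReal) * r + ((1 - a : ℝ) : EReal) * q :=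
        add_le_add (mul_le_mul_of_nonneg_left hu (EReal.coe_nonneg.2 ha))
          (mul_le_mul_of_nonneg_left hw (EReal.coe_nonneg.2 hb))
    _ = ((a * r + (1 - a) * q : ℝ) : EReal) := by norm_cast

variable {E : Type*} [NormedAddCommGroup E] [InnerProductSpace ℝ E]

noncomputable def fenchelConj (g : E → EReal) (y : E) : EReal :=
  ⨆ z, ((⟪z, y⟫ : ℝ) : EReal) - g z

theorem inner_sub_le_fenchelConj (g : E → EReal) (z y : E) :
    ((⟪z, y⟫ : ℝ) : EReal) - g z ≤ fenchelConj g y :=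
  le_iSup (fun z => ((⟪z, y⟫ : ℝ) : EReal) - g z) z

section Conjugate

variable {g : E → EReal}

theorem fenchelConj_le_iff {y : E} {c : EReal} :
    fenchelConj g y ≤ c ↔ ∀ z, ((⟪z, y⟫ : ℝ) : EReal) - g z ≤ c :=
  iSup_le_iff

theorem inner_sub_le_of_fenchelConj_le {y z : E} {c r : ℝ} (hy : fenchelConj g y ≤ c)
    (hz : g z ≤ r) : ⟪z, y⟫ - r ≤ c := by
  have h := (EReal.sub_le_sub le_rfl hz).trans ((inner_sub_le_fenchelConj g z y).trans hy)
  exact_mod_cast h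

theorem coe_inner_sub_le_of_fenchelConj_le {y : E} {c : ℝ} (hy : fenchelConj g y ≤ c) (z : E) :
    ((⟪z, y⟫ - c : ℝ) : EReal) ≤ g z :=
  EReal.le_of_forall_lt_iff_le.1 fun r hr => by
    have := inner_sub_le_of_fenchelConj_le hy hr.le
    exact_mod_cast (by linarith : ⟪z, y⟫ - c ≤ r)

theorem fenchelConj_le_of_forall {y : E} {c : ℝ}
    (h : ∀ z (r : ℝ), g z ≤ r → ⟪z, y⟫ - r ≤ c) : fenchelConj g y ≤ c := by
  refine fenchelConj_le_iff.2 fun z => ?_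
  have hz := h z
  generalize g z = w at hz ⊢
  induction w with
  | bot => linarith [hz (⟪z, y⟫ - c - 1) bot_le]
  | coe r => exact_mod_cast hz r le_rfl
  | top => simp

theorem fenchelConj_add_smul_sub_le {y₁ y₂ : E} {c₁ c₂ t : ℝ} (h₁ : fenchelConj g y₁ ≤ c₁)
    (h₂ : fenchelConj g y₂ ≤ c₂) (ht₀ : 0 ≤ t) (ht₁ : t ≤ 1) :
    fenchelConj g (y₁ + t • (y₂ - y₁)) ≤ (c₁ + t * (c₂ - c₁) : ℝ) := by
  refine fenchelConj_le_of_forall fun z r hr => ?_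
  have hz₁ := inner_sub_le_of_fenchelConj_le h₁ hr
  have hz₂ := inner_sub_le_of_fenchelConj_le h₂ hr
  rw [inner_add_right, real_inner_smul_right, inner_sub_right]
  nlinarith [mul_le_mul_of_nonneg_left hz₁ (sub_nonneg.2 ht₁), mul_le_mul_of_nonneg_left hz₂ ht₀]

theorem fenchelConj_smul_le {ξ : E} {s u : ℝ} (hs : s < 0)
    (h : ∀ z (r : ℝ), g z ≤ r → ⟪ξ, z⟫ + r * s ≤ u) :
    fenchelConj g ((-s)⁻¹ • ξ) ≤ (u / -s : ℝ) := by
  refine fenchelConj_le_of_forall fun z r hr => ?_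
  have hs' : 0 < -s := neg_pos.2 hs
  have hscaled : ((-s)⁻¹ * ⟪ξ, z⟫ - r) * -s = ⟪ξ, z⟫ + r * s := by
    field_simp [hs.ne]
    ring
  rw [real_inner_smul_right, real_inner_comm, le_div_iff₀ hs', hscaled]
  exact h z r hr

theorem fenchelConj_ne_bot (hproper : ∃ z, g z ≠ ⊤) (y : E) :
    fenchelConj g y ≠ ⊥ := by
  obtain ⟨z, hz⟩ := hproper
  refine ne_bot_of_le_ne_bot ?_ (inner_sub_le_fenchelConj g z y)
  rw [sub_eq_add_neg, ne_eq, EReal.add_eq_bot_iff]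
  simpa using hz

theorem nonpos_of_forall_inner_add_mul_lt {ξ : E} {s u : ℝ} {z₀ : E} {r₀ : ℝ}
    (h₀ : g z₀ ≤ r₀) (h : ∀ z (r : ℝ), g z ≤ r → ⟪ξ, z⟫ + r * s < u) : s ≤ 0 := by
  by_contra! hs
  have hgap := h z₀ r₀ h₀
  have hr : r₀ ≤ r₀ + (u - ⟪ξ, z₀⟫ - r₀ * s) / s :=
    le_add_of_nonneg_right (div_nonneg (by linarith) hs.le)
  have := h z₀ _ (h₀.trans (EReal.coe_le_coe_iff.2 hr))
  rw [add_mul, div_mul_cancel₀ _ hs.ne'] at this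
  linarith

end Conjugate

section FenchelMoreau

variable [CompleteSpace E] {g : E → EReal}

theorem exists_inner_add_mul_lt_of_lt (hconv : Convex ℝ (realEpigraph g))
    (hlsc : LowerSemicontinuous g) {z₁ : E} {r₁ : ℝ} (h : (r₁ : EReal) < g z₁) :
    ∃ (ξ : E) (s u : ℝ), (∀ z (r : ℝ), g z ≤ r → ⟪ξ, z⟫ + r * s < u) ∧
      u < ⟪ξ, z₁⟫ + r₁ * s := by
  obtain ⟨f, u, hf, hfu⟩ :=
    geometric_hahn_banach_closed_point hconv hlsc.isClosed_realEpigraph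
      (show (z₁, r₁) ∉ realEpigraph g from not_le.2 h)
  let ξ : E := (InnerProductSpace.toDual ℝ E).symm (f.comp (ContinuousLinearMap.inl ℝ E ℝ))
  have hf_apply : ∀ z (r : ℝ), f (z, r) = ⟪ξ, z⟫ + r * f (0, 1) := by
    intro z r
    have hzr : ((z, r) : E × ℝ) = (z, 0) + r • ((0 : E), (1 : ℝ)) := by simp
    rw [hzr, map_add, map_smul, InnerProductSpace.toDual_symm_apply, smul_eq_mul, mul_comm]
    rfl
  refine ⟨ξ, f (0, 1), u, fun z r hr => ?_, ?_⟩
  · rw [← hf_apply]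
    exact hf (z, r) hr
  · rw [← hf_apply]
    exact hfu

theorem exists_fenchelConj_le (hconv : Convex ℝ (realEpigraph g)) (hlsc : LowerSemicontinuous g)
    (hbot : ∀ z, g z ≠ ⊥) (hproper : ∃ z, g z ≠ ⊤) : ∃ (y : E) (c : ℝ), fenchelConj g y ≤ c := by
  obtain ⟨z₀, hz₀⟩ := hproper
  set c₀ := (g z₀).toReal
  have hc₀ : g z₀ = c₀ := (EReal.coe_toReal hz₀ (hbot z₀)).symm
  obtain ⟨ξ, s, u, hsep, hu⟩ :=
    exists_inner_add_mul_lt_of_lt hconv hlsc (hc₀ ▸ EReal.coe_lt_coe_iff.2 (sub_one_lt c₀))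
  have hs : s < 0 := by nlinarith [hsep z₀ c₀ hc₀.le]
  exact ⟨_, _, fenchelConj_smul_le hs fun z r hr => (hsep z r hr).le⟩

theorem exists_fenchelConj_eq_coe_of_forall_le (hconv : Convex ℝ (realEpigraph g))
    (hlsc : LowerSemicontinuous g) (hbot : ∀ z, g z ≠ ⊥) (hproper : ∃ z, g z ≠ ⊤) {p : ℝ}
    {q : E → ℝ} {y₀ : E}
    (hmin : ∀ y, (p : EReal) + fenchelConj g y₀ ≤ (q y : EReal) + fenchelConj g y) :
    ∃ c : ℝ, fenchelConj g y₀ = c := by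
  obtain ⟨y, c, hy⟩ := exists_fenchelConj_le hconv hlsc hbot hproper
  refine ⟨_, (EReal.coe_toReal (fun htop => ?_) (fenchelConj_ne_bot hproper y₀)).symm⟩
  have h := (hmin y).trans (add_le_add_right hy _)
  rw [htop, EReal.coe_add_top, ← EReal.coe_add, top_le_iff] at h
  exact EReal.coe_ne_top _ h

theorem le_fenchelConj_fenchelConj (hconv : Convex ℝ (realEpigraph g))
    (hlsc : LowerSemicontinuous g) (hbot : ∀ z, g z ≠ ⊥) (hproper : ∃ z, g z ≠ ⊤) (z₁ : E) :
    g z₁ ≤ fenchelConj (fenchelConj g) z₁ := by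
  refine EReal.ge_of_forall_gt_iff_ge.1 fun r₁ hr₁ => ?_
  obtain ⟨y₀, c₀, hy₀⟩ := exists_fenchelConj_le hconv hlsc hbot hproper
  obtain ⟨z₀, hz₀⟩ := hproper
  obtain ⟨ξ, s, u, hsep, hu⟩ := exists_inner_add_mul_lt_of_lt hconv hlsc hr₁
  have hs := nonpos_of_forall_inner_add_mul_lt (EReal.le_coe_toReal hz₀) hsep
  set δ := ⟪ξ, z₁⟫ + r₁ * s - u
  have hδ : 0 < δ := by linarith
  -- adding `t` times the separating functional to the affine minorant `⟪·, y₀⟫ - c₀` of `g`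
  -- makes the separating hyperplane non-vertical, even when `s = 0`
  set t := max 0 ((r₁ + c₀ - ⟪z₁, y₀⟫) / δ)
  have ht : 0 ≤ t := le_max_left _ _
  have htδ : r₁ + c₀ - ⟪z₁, y₀⟫ ≤ t * δ := (div_le_iff₀ hδ).1 (le_max_right _ _)
  have hslope : t * s - 1 < 0 := by nlinarith
  have htilt : ∀ z (r : ℝ), g z ≤ r → ⟪y₀ + t • ξ, z⟫ + r * (t * s - 1) ≤ c₀ + t * u := by
    intro z r hr
    have h₁ := inner_sub_le_of_fenchelConj_le hy₀ hr
    have h₂ := mul_le_mul_of_nonneg_left (hsep z r hr).le ht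
    rw [inner_add_left, real_inner_smul_left, real_inner_comm]
    nlinarith
  set y := (-(t * s - 1))⁻¹ • (y₀ + t • ξ)
  have hy := fenchelConj_smul_le hslope htilt
  have hr₁y : r₁ ≤ ⟪z₁, y⟫ - (c₀ + t * u) / -(t * s - 1) := by
    rw [real_inner_smul_right, inner_add_right, real_inner_smul_right, real_inner_comm ξ,
      ← div_eq_inv_mul, ← sub_div, le_div_iff₀ (by linarith)]
    nlinarith
  calc (r₁ : EReal) ≤ ((⟪z₁, y⟫ - (c₀ + t * u) / -(t * s - 1) : ℝ) : EReal) := by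
        exact_mod_cast hr₁y
    _ ≤ ((⟪y, z₁⟫ : ℝ) : EReal) - fenchelConj g y := by
        rw [EReal.coe_sub, real_inner_comm]
        exact EReal.sub_le_sub le_rfl hy
    _ ≤ fenchelConj (fenchelConj g) z₁ := inner_sub_le_fenchelConj _ y z₁

theorem le_inner_sub_of_forall_add_inner_le_fenchelConj
    (hconv : Convex ℝ (realEpigraph g)) (hlsc : LowerSemicontinuous g) (hbot : ∀ z, g z ≠ ⊥)
    (hproper : ∃ z, g z ≠ ⊤) {z y₀ : E} {c₀ : ℝ}
    (hsub : ∀ y, ((c₀ + ⟪z, y - y₀⟫ : ℝ) : EReal) ≤ fenchelConj g y) :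
    g z ≤ ((⟪z, y₀⟫ - c₀ : ℝ) : EReal) := by
  refine (le_fenchelConj_fenchelConj hconv hlsc hbot hproper z).trans
    (fenchelConj_le_iff.2 fun y => ?_)
  calc ((⟪y, z⟫ : ℝ) : EReal) - fenchelConj g y
      ≤ ((⟪y, z⟫ : ℝ) : EReal) - ((c₀ + ⟪z, y - y₀⟫ : ℝ) : EReal) :=
        EReal.sub_le_sub le_rfl (hsub y)
    _ = ((⟪z, y₀⟫ - c₀ : ℝ) : EReal) := by
        rw [← EReal.coe_sub, inner_sub_right, real_inner_comm]
        ring_nf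

end FenchelMoreau

theorem nonneg_of_forall_mem_Ioc_nonneg_add_mul {b κ : ℝ}
    (h : ∀ t ∈ Ioc (0 : ℝ) 1, 0 ≤ b + t * κ) : 0 ≤ b := by
  have hlim : Tendsto (fun t => b + t * κ) (𝓝[>] 0) (𝓝 b) := by
    have hcont : Continuous fun t : ℝ => b + t * κ := by fun_prop
    simpa using (hcont.tendsto 0).mono_left nhdsWithin_le_nhds
  exact ge_of_tendsto hlim (mem_of_superset (Ioc_mem_nhdsGT one_pos) h)

theorem LinearMap.IsSymmetric.inner_add_smul_apply_add_smul {M : E →ₗ[ℝ] E} (hM : M.IsSymmetric)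
    (y d : E) (t : ℝ) :
    ⟪y + t • d, M (y + t • d)⟫ = ⟪y, M y⟫ + 2 * t * ⟪M y, d⟫ + t ^ 2 * ⟪d, M d⟫ := by
  simp only [map_add, map_smul, inner_add_left, inner_add_right, real_inner_smul_left,
    real_inner_smul_right, ← hM y d, real_inner_comm (M y) d]
  ring

theorem add_inner_le_fenchelConj_of_forall_le {g : E → EReal} {M : E →ₗ[ℝ] E}
    (hM : M.IsSymmetric) {a y₀ : E} {c₀ : ℝ} (hc₀ : fenchelConj g y₀ = c₀)
    (hmin : ∀ y, ((1 / 2 * ⟪y₀, M y₀⟫ - ⟪a, y₀⟫ : ℝ) : EReal) + fenchelConj g y₀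
      ≤ ((1 / 2 * ⟪y, M y⟫ - ⟪a, y⟫ : ℝ) : EReal) + fenchelConj g y) (y : E) :
    ((c₀ + ⟪a - M y₀, y - y₀⟫ : ℝ) : EReal) ≤ fenchelConj g y := by
  refine EReal.le_of_forall_lt_iff_le.1 fun c hc => ?_
  set d := y - y₀
  have hdescent : ∀ t ∈ Ioc (0 : ℝ) 1, 0 ≤ (⟪M y₀ - a, d⟫ + c - c₀) + t * (1 / 2 * ⟪d, M d⟫) := by
    rintro t ⟨ht₀, ht₁⟩
    have hconv := fenchelConj_add_smul_sub_le hc₀.le hc.le ht₀.le ht₁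
    have h := (hmin (y₀ + t • d)).trans (add_le_add_right hconv _)
    rw [hc₀, ← EReal.coe_add, ← EReal.coe_add, EReal.coe_le_coe_iff,
      hM.inner_add_smul_apply_add_smul, inner_add_right, real_inner_smul_right] at h
    have : 0 ≤ t * ((⟪M y₀ - a, d⟫ + c - c₀) + t * (1 / 2 * ⟪d, M d⟫)) := by
      rw [inner_sub_left]
      nlinarith
    exact nonneg_of_mul_nonneg_right this ht₀
  have h := nonneg_of_forall_mem_Ioc_nonneg_add_mul hdescent
  rw [inner_sub_left] at h ⊢
  exact_mod_cast (by linarith : c₀ + (⟪a, d⟫ - ⟪M y₀, d⟫) ≤ c)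

theorem LinearMap.IsPositive.inner_add_half_inner_le {T : E →ₗ[ℝ] E} (hT : T.IsPositive)
    {b w : E} (hw : T w = -b) (v : E) :
    ⟪b, w⟫ + 1 / 2 * ⟪w, T w⟫ ≤ ⟪b, v⟫ + 1 / 2 * ⟪v, T v⟫ := by
  have h := hT.2 (v - w)
  have hvw : ⟪T v, w⟫ = -⟪b, v⟫ := by rw [hT.1, hw, inner_neg_right, real_inner_comm]
  rw [RCLike.re_to_real, map_sub, inner_sub_left, inner_sub_right, inner_sub_right, hvw, hw,
    inner_neg_left, inner_neg_left] at h
  rw [hw, inner_neg_right, real_inner_comm b w, real_inner_comm (T v) v]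
  linarith

theorem Matrix.inner_toEuclideanLin_transpose {m n : Type*} [Fintype m] [DecidableEq m]
    [Fintype n] [DecidableEq n] (A : Matrix m n ℝ) (u : EuclideanSpace ℝ n)
    (y : EuclideanSpace ℝ m) : ⟪u, toEuclideanLin Aᵀ y⟫ = ⟪toEuclideanLin A u, y⟫ := by
  rw [← conjTranspose_eq_transpose_of_trivial, toEuclideanLin_conjTranspose_eq_adjoint,
    LinearMap.adjoint_inner_right]

theorem Matrix.PosDef.isSymmetric_toEuclideanLin_mul_inv_mul_transpose {m n : Type*}
    [Fintype m] [DecidableEq m] [Fintype n] [DecidableEq n] {P : Matrix n n ℝ} (hP : P.PosDef)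
    (A : Matrix m n ℝ) : (toEuclideanLin (A * P⁻¹ * Aᵀ)).IsSymmetric := by
  rw [isSymmetric_toEuclideanLin_iff, ← conjTranspose_eq_transpose_of_trivial]
  exact isHermitian_mul_mul_conjTranspose A hP.isHermitian.inv

theorem Matrix.PosDef.inner_add_half_inner_add_inner_le {m n : Type*} [Fintype m]
    [DecidableEq m] [Fintype n] [DecidableEq n] {P : Matrix n n ℝ} (hP : P.PosDef)
    (A : Matrix m n ℝ) {b x xtilde : EuclideanSpace ℝ n} {y : EuclideanSpace ℝ m}
    (hxtilde : xtilde = x - toEuclideanLin P⁻¹ (b + toEuclideanLin Aᵀ y))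
    (x' : EuclideanSpace ℝ n) :
    ⟪b, xtilde - x⟫ + 1 / 2 * ⟪xtilde - x, toEuclideanLin P (xtilde - x)⟫
        + ⟪toEuclideanLin A xtilde, y⟫
      ≤ ⟪b, x' - x⟫ + 1 / 2 * ⟪x' - x, toEuclideanLin P (x' - x)⟫ + ⟪toEuclideanLin A x', y⟫ := by
  have hPw : toEuclideanLin P (xtilde - x) = -(b + toEuclideanLin Aᵀ y) := by
    rw [hxtilde, sub_sub_cancel_left, map_neg, ← LinearMap.comp_apply, ← toLpLin_mul_same,
      mul_nonsing_inv _ ((isUnit_iff_isUnit_det _).1 hP.isUnit), toLpLin_one, LinearMap.id_apply]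
  have hquad :=
    (isPositive_toEuclideanLin_iff.2 hP.posSemidef).inner_add_half_inner_le hPw (x' - x)
  have hadj : ∀ u, ⟪toEuclideanLin Aᵀ y, u - x⟫
      = ⟪toEuclideanLin A u, y⟫ - ⟪toEuclideanLin A x, y⟫ := fun u => by
    rw [real_inner_comm, inner_toEuclideanLin_transpose, map_sub, inner_sub_left]
  rw [inner_add_left, inner_add_left, hadj, hadj] at hquad
  linarith

theorem stmt10_general {n m : ℕ}
    (f : EuclideanSpace ℝ (Fin n) → ℝ) (x : EuclideanSpace ℝ (Fin n))
    (g : EuclideanSpace ℝ (Fin m) → EReal)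
    (hg_proper : ∃ z, g z ≠ ⊤)
    (hg_ne_bot : ∀ z, g z ≠ ⊥)
    (hg_lsc : LowerSemicontinuous g)
    (hg_convex : ∀ u w : EuclideanSpace ℝ (Fin m), ∀ t : ℝ, 0 ≤ t → t ≤ 1 →
        g (t • u + (1 - t) • w) ≤ (t : EReal) * g u + ((1 - t : ℝ) : EReal) * g w)
    (A : Matrix (Fin m) (Fin n) ℝ)
    (P : Matrix (Fin n) (Fin n) ℝ) (hP : P.PosDef)
    (a : EuclideanSpace ℝ (Fin m))
    (ha : a = Matrix.toEuclideanLin A x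
        - Matrix.toEuclideanLin A (Matrix.toEuclideanLin P⁻¹ (gradient f x)))
    (gstar : EuclideanSpace ℝ (Fin m) → EReal)
    (hgstar : ∀ y, gstar y = ⨆ z : EuclideanSpace ℝ (Fin m),
        (((⟪z, y⟫ : ℝ) : EReal) - g z))
    (ystar : EuclideanSpace ℝ (Fin m))
    (hystar : ∀ y : EuclideanSpace ℝ (Fin m),
        (((1 / 2) * ⟪ystar, Matrix.toEuclideanLin (A * P⁻¹ * Aᵀ) ystar⟫
            - ⟪a, ystar⟫ : ℝ) : EReal) + gstar ystar
          ≤ (((1 / 2) * ⟪y, Matrix.toEuclideanLin (A * P⁻¹ * Aᵀ) y⟫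
            - ⟪a, y⟫ : ℝ) : EReal) + gstar y)
    (xtilde : EuclideanSpace ℝ (Fin n))
    (hxtilde : xtilde = x - Matrix.toEuclideanLin P⁻¹
        (gradient f x + Matrix.toEuclideanLin Aᵀ ystar)) :
    ∀ x' : EuclideanSpace ℝ (Fin n),
      ((⟪gradient f x, xtilde - x⟫
          + (1 / 2) * ⟪xtilde - x, Matrix.toEuclideanLin P (xtilde - x)⟫ : ℝ) : EReal)
        + g (Matrix.toEuclideanLin A xtilde)
      ≤ ((⟪gradient f x, x' - x⟫
          + (1 / 2) * ⟪x' - x, Matrix.toEuclideanLin P (x' - x)⟫ : ℝ) : EReal)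
        + g (Matrix.toEuclideanLin A x') := by
  intro x'
  obtain rfl : gstar = fenchelConj g := funext hgstar
  have hconv := convex_realEpigraph hg_convex
  obtain ⟨cs, hcs⟩ :=
    exists_fenchelConj_eq_coe_of_forall_le hconv hg_lsc hg_ne_bot hg_proper hystar
  have hsub := add_inner_le_fenchelConj_of_forall_le
    (hP.isSymmetric_toEuclideanLin_mul_inv_mul_transpose A) hcs hystar
  have hAxtilde : toEuclideanLin A xtilde = a - toEuclideanLin (A * P⁻¹ * Aᵀ) ystar := by
    rw [hxtilde, ha]
    simp only [map_sub, map_add, toLpLin_mul_same, LinearMap.comp_apply]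
    abel
  have hfen : g (toEuclideanLin A xtilde) ≤ ((⟪toEuclideanLin A xtilde, ystar⟫ - cs : ℝ) : EReal) :=
    hAxtilde ▸ le_inner_sub_of_forall_add_inner_le_fenchelConj hconv hg_lsc hg_ne_bot hg_proper hsub
  have hlagr := hP.inner_add_half_inner_add_inner_le A hxtilde x'
  refine (add_le_add_right hfen _).trans (le_trans ?_
    (add_le_add_right (coe_inner_sub_le_of_fenchelConj_le hcs.le (toEuclideanLin A x')) _))
  rw [← EReal.coe_add, ← EReal.coe_add, EReal.coe_le_coe_iff]
  linarith

/-- If `y*` minimizes the dual problem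
`y ↦ (1/2)yᵀ(AP⁻¹Aᵀ)y + g*(y) − aᵀy` with `a = Ax − AP⁻¹∇f(x)` and `g*` the Fenchel conjugate
of `g`, then `x̃ = x − P⁻¹(∇f(x) + Aᵀy*)` minimizes the primal subproblem
`x' ↦ ∇f(x)ᵀ(x' − x) + g(Ax') + (1/2)(x'−x)ᵀP(x'−x)`. -/
theorem stmt10 {n m : ℕ}
    (f : EuclideanSpace ℝ (Fin n) → ℝ) (x : EuclideanSpace ℝ (Fin n))
    (hf : DifferentiableAt ℝ f x)
    (g : EuclideanSpace ℝ (Fin m) → EReal)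
    (hg_proper : ∃ z, g z ≠ ⊤)
    (hg_ne_bot : ∀ z, g z ≠ ⊥)
    (hg_lsc : LowerSemicontinuous g)
    (hg_convex : ∀ u w : EuclideanSpace ℝ (Fin m), ∀ t : ℝ, 0 ≤ t → t ≤ 1 →
        g (t • u + (1 - t) • w) ≤ (t : EReal) * g u + ((1 - t : ℝ) : EReal) * g w)
    (A : Matrix (Fin m) (Fin n) ℝ)
    (P : Matrix (Fin n) (Fin n) ℝ) (hP : P.PosDef)
    (a : EuclideanSpace ℝ (Fin m))
    (ha : a = Matrix.toEuclideanLin A x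
        - Matrix.toEuclideanLin A (Matrix.toEuclideanLin P⁻¹ (gradient f x)))
    (gstar : EuclideanSpace ℝ (Fin m) → EReal)
    (hgstar : ∀ y, gstar y = ⨆ z : EuclideanSpace ℝ (Fin m),
        (((⟪z, y⟫ : ℝ) : EReal) - g z))
    (ystar : EuclideanSpace ℝ (Fin m))
    (hystar : ∀ y : EuclideanSpace ℝ (Fin m),
        (((1 / 2) * ⟪ystar, Matrix.toEuclideanLin (A * P⁻¹ * Aᵀ) ystar⟫
            - ⟪a, ystar⟫ : ℝ) : EReal) + gstar ystar
          ≤ (((1 / 2) * ⟪y, Matrix.toEuclideanLin (A * P⁻¹ * Aᵀ) y⟫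
            - ⟪a, y⟫ : ℝ) : EReal) + gstar y)
    (xtilde : EuclideanSpace ℝ (Fin n))
    (hxtilde : xtilde = x - Matrix.toEuclideanLin P⁻¹
        (gradient f x + Matrix.toEuclideanLin Aᵀ ystar)) :
    ∀ x' : EuclideanSpace ℝ (Fin n),
      ((⟪gradient f x, xtilde - x⟫
          + (1 / 2) * ⟪xtilde - x, Matrix.toEuclideanLin P (xtilde - x)⟫ : ℝ) : EReal)
        + g (Matrix.toEuclideanLin A xtilde)
      ≤ ((⟪gradient f x, x' - x⟫
          + (1 / 2) * ⟪x' - x, Matrix.toEuclideanLin P (x' - x)⟫ : ℝ) : EReal)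
        + g (Matrix.toEuclideanLin A x') :=
  stmt10_general f x g hg_proper hg_ne_bot hg_lsc hg_convex A P hP a ha gstar hgstar ystar hystar
    xtilde hxtilde
end
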